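/- arXiv:1103.1567 — 9 statements merged into one kernel-verified Lean document; each statement's English description precedes it below -/
import Mathlib

section
/- Let Γ be a countable discrete group, k ∈ ℕ, and A ∈ M_k(ℤΓ) a matrix invertible in the Banach algebra M_k(ℓ¹(Γ)). Then for every nonzero x ∈ X_A = {x ∈ ((ℝ/ℤ)^Γ)^k : xA* = 0} one has sup_{s∈Γ} ρ_∞(x_s, 0) ≥ ‖A‖₁⁻¹; in particular, the left-shift action of Γ on X_A is expansive. -/
/-!
STATEMENT 3: If `A ∈ M_k(ℤΓ)` is invertible in `M_k(ℓ¹(Γ))`, then every nonzero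
`x ∈ X_A = {x ∈ ((ℝ/ℤ)^Γ)^k : xA* = 0}` satisfies `sup_s ρ_∞(x_s, 0) ≥ ‖A‖₁⁻¹`; in
particular the shift action of `Γ` on `X_A` is expansive.
-/

open scoped Classical

namespace Stmt3

variable {Γ : Type*} [Group Γ]

/-- Convolution of two real-valued functions on `Γ`. -/
noncomputable def conv (f g : Γ → ℝ) : Γ → ℝ := fun s => ∑' t, f t * g (t⁻¹ * s)

/-- Convolution product of matrices of real-valued functions on `Γ`. -/
noncomputable def matConv {k n m : ℕ} (A : Matrix (Fin k) (Fin n) (Γ → ℝ))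
    (B : Matrix (Fin n) (Fin m) (Γ → ℝ)) : Matrix (Fin k) (Fin m) (Γ → ℝ) :=
  fun i j => fun s => ∑ l, conv (A i l) (B l j) s

/-- The identity matrix of `M_k(ℓ¹(Γ))`. -/
noncomputable def matOne {k : ℕ} : Matrix (Fin k) (Fin k) (Γ → ℝ) :=
  fun i j s => if i = j ∧ s = 1 then 1 else 0

/-- `f : Γ → ℝ` is absolutely summable, i.e. lies in `ℓ¹(Γ)`. -/
def MemL1 (f : Γ → ℝ) : Prop := Summable fun s => |f s|

/-- An integral group ring element, viewed as a real-valued function on `Γ`. -/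
noncomputable def coeMA (f : MonoidAlgebra ℤ Γ) : Γ → ℝ := fun s => (f.coeff s : ℝ)

/-- A matrix over `ℤΓ` viewed as a matrix of real-valued functions on `Γ`. -/
noncomputable def coeMat {n k : ℕ} (A : Matrix (Fin n) (Fin k) (MonoidAlgebra ℤ Γ)) :
    Matrix (Fin n) (Fin k) (Γ → ℝ) := fun i j => coeMA (A i j)

/-- `A ∈ M_k(ℤΓ)` is invertible in the Banach algebra `M_k(ℓ¹(Γ))`. -/
def InvertibleL1 {k : ℕ} (A : Matrix (Fin k) (Fin k) (MonoidAlgebra ℤ Γ)) : Prop :=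
  ∃ B : Matrix (Fin k) (Fin k) (Γ → ℝ), (∀ i j, MemL1 (B i j)) ∧
    matConv (coeMat A) B = matOne ∧ matConv B (coeMat A) = matOne

/-- The norm `‖A‖₁` of a matrix over `ℤΓ`: the sum of the `ℓ¹`-norms of its entries. -/
noncomputable def normL1 {n k : ℕ} (A : Matrix (Fin n) (Fin k) (MonoidAlgebra ℤ Γ)) : ℝ :=
  ∑ i, ∑ j, (A i j).coeff.sum fun _ c => |(c : ℝ)|

/-- The row vector `x A*`, for `x ∈ (M^Γ)^k` and `A ∈ M_{n×k}(ℤΓ)`. -/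
noncomputable def mulStar {k n : ℕ} {M : Type*} [AddCommGroup M]
    (x : Fin k → Γ → M) (A : Matrix (Fin n) (Fin k) (MonoidAlgebra ℤ Γ)) :
    Fin n → Γ → M :=
  fun i s => ∑ j, (A i j).coeff.sum fun u c => c • x j (s * u)

/-- The closed shift-invariant subgroup `X_A = {x ∈ ((ℝ/ℤ)^Γ)^k : xA* = 0}`. -/
def XA {k : ℕ} (A : Matrix (Fin k) (Fin k) (MonoidAlgebra ℤ Γ)) :
    Set (Fin k → Γ → AddCircle (1 : ℝ)) :=
  {x | mulStar x A = 0}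

/-- Expansiveness of the left-shift action of `Γ` on a shift-invariant subgroup
`X ⊆ ((ℝ/ℤ)^Γ)^k`. -/
noncomputable def ShiftExpansive {k : ℕ} (X : Set (Fin k → Γ → AddCircle (1 : ℝ))) : Prop :=
  ∃ c : ℝ, 0 < c ∧
    ∀ x ∈ X, (⨆ s : Γ, dist (fun j => x j s) (0 : Fin k → AddCircle (1 : ℝ))) < c → x = 0

end Stmt3

/-!
Let `B ∈ M_k(ℓ¹(Γ))` with `B A = 1`, and let `x ∈ X_A` have all coordinates within `ε` of `0`,
where `ε ‖A‖₁ < 1`. Lift `x` coordinatewise to a real `y` with `|y_j(s)| = ‖x_j(s)‖ ≤ ε`. Then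
`y A*` is integer-valued (its image in `ℝ/ℤ` is `x A* = 0`) and bounded by `ε ‖A‖₁ < 1`, so
`y A* = 0`. Since `y` is bounded and `B` is summable, `B A = 1` gives
`y_l(s) = ∑_i ∑_t B_{li}(t) (y A*)_i(s t) = 0`, hence `x = 0`.
-/

namespace AddCircle

theorem exists_coe_eq_and_abs_eq_norm (p : ℝ) (a : AddCircle p) :
    ∃ z : ℝ, (z : AddCircle p) = a ∧ |z| = ‖a‖ := by
  obtain ⟨x, rfl⟩ := QuotientAddGroup.mk_surjective a
  refine ⟨x - round (p⁻¹ * x) * p, ?_, norm_eq p (x := x) |>.symm⟩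
  rw [coe_sub, ← zsmul_eq_mul, coe_zsmul, coe_period, smul_zero, sub_zero]

theorem eq_zero_of_coe_eq_zero_of_abs_lt {p r : ℝ} (h : (r : AddCircle p) = 0) (hr : |r| < |p|) :
    r = 0 := by
  obtain ⟨n, rfl⟩ := (coe_eq_zero_iff p).mp h
  have hp : 0 < |p| := (abs_nonneg _).trans_lt hr
  rw [zsmul_eq_mul, abs_mul] at hr
  have hn : |(n : ℝ)| < 1 := by nlinarith
  have : n = 0 := Int.abs_lt_one_iff.mp (by rw [← Int.cast_abs] at hn; exact_mod_cast hn)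
  simp [this]

end AddCircle

theorem summable_mul_of_abs_le {ι : Type*} {f g : ι → ℝ} (hf : Summable fun t => |f t|) {C : ℝ}
    (hg : ∀ t, |g t| ≤ C) : Summable fun t => f t * g t := by
  refine .of_norm_bounded (hf.mul_right C) fun t => ?_
  rw [Real.norm_eq_abs, abs_mul]
  exact mul_le_mul_of_nonneg_left (hg t) (abs_nonneg _)

namespace Stmt3

theorem normL1_nonneg {Γ : Type*} {n k : ℕ} (A : Matrix (Fin n) (Fin k) (MonoidAlgebra ℤ Γ)) :
    0 ≤ normL1 A := by
  unfold normL1 Finsupp.sum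
  positivity

variable {Γ : Type*} [Group Γ]

theorem conv_coeMA (f : Γ → ℝ) (a : MonoidAlgebra ℤ Γ) (v : Γ) :
    conv f (coeMA a) v = a.coeff.sum fun u c => c * f (v * u⁻¹) := by
  rw [conv, ← ((Equiv.inv Γ).trans (Equiv.mulLeft v)).tsum_eq]
  simp only [Equiv.trans_apply, Equiv.inv_apply, Equiv.coe_mulLeft, mul_inv_rev, inv_inv,
    inv_mul_cancel_right]
  rw [tsum_eq_sum (s := a.coeff.support) fun u hu => by
    simp [coeMA, Finsupp.notMem_support_iff.mp hu]]
  exact Finset.sum_congr rfl fun u _ => mul_comm _ _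

theorem hasSum_conv_coeMA_mul {f : Γ → ℝ} (hf : MemL1 f) (a : MonoidAlgebra ℤ Γ) {y : Γ → ℝ}
    {C : ℝ} (hy : ∀ t, |y t| ≤ C) :
    HasSum (fun v => conv f (coeMA a) v * y v)
      (a.coeff.sum fun u c => c * ∑' t, f t * y (t * u)) := by
  simp only [conv_coeMA, Finsupp.sum, Finset.sum_mul]
  refine hasSum_sum fun u _ => ?_
  rw [← (Equiv.mulRight u).hasSum_iff]
  simpa [Function.comp_def, mul_assoc] using
    (summable_mul_of_abs_le hf fun t => hy (t * u)).hasSum.mul_left (a.coeff u : ℝ)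

theorem tsum_matConv_coeMat_mul {m n k : ℕ} {B : Matrix (Fin m) (Fin n) (Γ → ℝ)}
    (hB : ∀ i j, MemL1 (B i j)) (A : Matrix (Fin n) (Fin k) (MonoidAlgebra ℤ Γ)) (l : Fin m)
    (j : Fin k) {y : Γ → ℝ} {C : ℝ} (hy : ∀ t, |y t| ≤ C) :
    ∑' v, matConv B (coeMat A) l j v * y v
      = ∑ i, (A i j).coeff.sum fun u c => c * ∑' t, B l i t * y (t * u) := by
  simp only [matConv, Finset.sum_mul]
  exact (hasSum_sum fun i _ => hasSum_conv_coeMA_mul (hB l i) (A i j) hy).tsum_eq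

theorem tsum_mul_mulStar {n k : ℕ} {f : Γ → ℝ} (hf : MemL1 f) {y : Fin k → Γ → ℝ} {C : ℝ}
    (hy : ∀ j t, |y j t| ≤ C) (A : Matrix (Fin n) (Fin k) (MonoidAlgebra ℤ Γ)) (i : Fin n)
    (s : Γ) :
    ∑' t, f t * mulStar y A i (s * t)
      = ∑ j, (A i j).coeff.sum fun u c => c * ∑' t, f t * y j (s * t * u) := by
  simp only [mulStar, Finsupp.sum, Finset.mul_sum, zsmul_eq_mul, mul_left_comm (f _)]
  refine (hasSum_sum fun j _ => hasSum_sum fun u _ => ?_).tsum_eq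
  exact (summable_mul_of_abs_le hf fun t => hy j _).hasSum.mul_left _

theorem sum_tsum_matOne_mul {k : ℕ} (y : Fin k → Γ → ℝ) (l : Fin k) :
    ∑ j, ∑' v, matOne l j v * y j v = y l 1 := by
  rw [Finset.sum_eq_single l (fun j _ hj => by simp [matOne, Ne.symm hj]) (by simp),
    tsum_eq_single 1 (fun v hv => by simp [matOne, hv])]
  simp [matOne]

theorem eq_zero_of_mulStar_eq_zero {n k : ℕ} {A : Matrix (Fin n) (Fin k) (MonoidAlgebra ℤ Γ)}
    {B : Matrix (Fin k) (Fin n) (Γ → ℝ)} (hB : ∀ i j, MemL1 (B i j))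
    (hBA : matConv B (coeMat A) = matOne) {y : Fin k → Γ → ℝ} {C : ℝ}
    (hy : ∀ j t, |y j t| ≤ C) (hyA : mulStar y A = 0) : y = 0 := by
  funext l s
  calc y l s = ∑ j, ∑' v, matOne l j v * y j (s * v) := by
        simpa using (sum_tsum_matOne_mul (fun j v => y j (s * v)) l).symm
    _ = ∑ j, ∑ i, (A i j).coeff.sum fun u c => c * ∑' t, B l i t * y j (s * (t * u)) := by
        rw [← hBA]
        exact Finset.sum_congr rfl fun j _ => tsum_matConv_coeMat_mul hB A l j fun t => hy j _
    _ = ∑ i, ∑' t, B l i t * mulStar y A i (s * t) := by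
        rw [Finset.sum_comm]
        simp only [tsum_mul_mulStar (hB l _) hy, mul_assoc]
    _ = 0 := by simp [hyA]

theorem mulStar_map {n k : ℕ} {M N : Type*} [AddCommGroup M] [AddCommGroup N] (f : M →+ N)
    (x : Fin k → Γ → M) (A : Matrix (Fin n) (Fin k) (MonoidAlgebra ℤ Γ)) :
    mulStar (fun j s => f (x j s)) A = fun i s => f (mulStar x A i s) := by
  ext i s
  simp [mulStar, Finsupp.sum, map_sum, map_zsmul]

theorem abs_mulStar_le {n k : ℕ} (A : Matrix (Fin n) (Fin k) (MonoidAlgebra ℤ Γ))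
    {y : Fin k → Γ → ℝ} {ε : ℝ} (hε : 0 ≤ ε) (hy : ∀ j t, |y j t| ≤ ε) (i : Fin n) (s : Γ) :
    |mulStar y A i s| ≤ ε * normL1 A := by
  calc |mulStar y A i s| ≤ ∑ j, (A i j).coeff.sum fun _ c => |(c : ℝ)| * ε := by
        unfold mulStar Finsupp.sum
        refine (Finset.abs_sum_le_sum_abs _ _).trans (Finset.sum_le_sum fun j _ => ?_)
        refine (Finset.abs_sum_le_sum_abs _ _).trans (Finset.sum_le_sum fun u _ => ?_)
        dsimp only
        rw [zsmul_eq_mul, abs_mul]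
        exact mul_le_mul_of_nonneg_left (hy j _) (abs_nonneg _)
    _ = ε * ∑ j, (A i j).coeff.sum fun _ c => |(c : ℝ)| := by
        rw [mul_comm, Finset.sum_mul]
        simp only [Finsupp.sum, Finset.sum_mul]
    _ ≤ ε * normL1 A := by
        refine mul_le_mul_of_nonneg_left ?_ hε
        exact Finset.single_le_sum (f := fun i => ∑ j, (A i j).coeff.sum fun _ c => |(c : ℝ)|)
          (fun i _ => by unfold Finsupp.sum; positivity) (Finset.mem_univ i)

theorem eq_zero_of_mem_XA_of_dist_le {k : ℕ} {A : Matrix (Fin k) (Fin k) (MonoidAlgebra ℤ Γ)}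
    {B : Matrix (Fin k) (Fin k) (Γ → ℝ)} (hB : ∀ i j, MemL1 (B i j))
    (hBA : matConv B (coeMat A) = matOne) {x : Fin k → Γ → AddCircle (1 : ℝ)} (hx : x ∈ XA A)
    {ε : ℝ} (hxε : ∀ j s, dist (x j s) 0 ≤ ε) (hεA : ε * normL1 A < 1) : x = 0 := by
  rcases isEmpty_or_nonempty (Fin k) with hk | hk
  · exact Subsingleton.elim _ _
  obtain ⟨j₀⟩ := hk
  have hε : 0 ≤ ε := dist_nonneg.trans (hxε j₀ 1)
  choose y hyx hyx_norm using fun j s => AddCircle.exists_coe_eq_and_abs_eq_norm 1 (x j s)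
  have hyε : ∀ j s, |y j s| ≤ ε := fun j s => by
    rw [hyx_norm, ← dist_zero_right]
    exact hxε j s
  have hyA : mulStar y A = 0 := by
    funext i s
    refine AddCircle.eq_zero_of_coe_eq_zero_of_abs_lt (p := 1) ?_ ?_
    · have hxA : mulStar x A i s = 0 := congrFun (congrFun hx i) s
      rw [← hxA, ← funext₂ hyx]
      exact (congrFun (congrFun (mulStar_map (QuotientAddGroup.mk' _) y A) i) s).symm
    · simpa using (abs_mulStar_le A hε hyε i s).trans_lt hεA
  have hy0 : y = 0 := eq_zero_of_mulStar_eq_zero hB hBA hyε hyA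
  funext j s
  rw [← hyx, hy0]
  rfl

theorem dist_le_iSup_dist {ι : Type*} {k : ℕ} (x : Fin k → ι → AddCircle (1 : ℝ)) (j : Fin k)
    (s : ι) : dist (x j s) 0 ≤ ⨆ s, dist (fun j => x j s) (0 : Fin k → AddCircle (1 : ℝ)) := by
  refine (dist_le_pi_dist (fun j => x j s) 0 j).trans
    (le_ciSup (f := fun s => dist (fun j => x j s) 0) ⟨1 / 2, ?_⟩ s)
  rintro _ ⟨t, rfl⟩
  refine (dist_pi_le_iff (by norm_num)).mpr fun j => ?_
  simpa using AddCircle.norm_le_half_period 1 (x := x j t) one_ne_zero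

end Stmt3

open Stmt3 in
theorem stmt3_general {Γ : Type*} [Group Γ] (k : ℕ)
    (A : Matrix (Fin k) (Fin k) (MonoidAlgebra ℤ Γ)) (hA : InvertibleL1 A) :
    (∀ x ∈ XA A, x ≠ 0 →
      (normL1 A)⁻¹ ≤ ⨆ s : Γ, dist (fun j => x j s) (0 : Fin k → AddCircle (1 : ℝ))) ∧
    ShiftExpansive (XA A) := by
  obtain ⟨B, hB, -, hBA⟩ := hA
  have hN := normL1_nonneg A
  have key : ∀ x ∈ XA A,
      (⨆ s : Γ, dist (fun j => x j s) (0 : Fin k → AddCircle (1 : ℝ))) * normL1 A < 1 → x = 0 :=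
    fun x hx => eq_zero_of_mem_XA_of_dist_le hB hBA hx (dist_le_iSup_dist x)
  have hsup : ∀ x : Fin k → Γ → AddCircle (1 : ℝ),
      0 ≤ ⨆ s : Γ, dist (fun j => x j s) (0 : Fin k → AddCircle (1 : ℝ)) :=
    fun x => Real.iSup_nonneg fun _ => dist_nonneg
  refine ⟨fun x hx hx0 => ?_, (normL1 A + 1)⁻¹, by positivity, fun x hx hlt => key x hx ?_⟩
  · by_contra! hlt
    have hpos : 0 < normL1 A := inv_pos.mp ((hsup x).trans_lt hlt)
    rw [← one_mul (normL1 A)⁻¹, lt_mul_inv_iff₀ hpos] at hlt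
    exact hx0 (key x hx hlt)
  · rw [← one_mul (normL1 A + 1)⁻¹, lt_mul_inv_iff₀ (by positivity)] at hlt
    nlinarith [hsup x]

open Stmt3 in
theorem stmt3 {Γ : Type*} [Group Γ] [Countable Γ] (k : ℕ)
    (A : Matrix (Fin k) (Fin k) (MonoidAlgebra ℤ Γ)) (hA : InvertibleL1 A) :
    (∀ x ∈ XA A, x ≠ 0 →
      (normL1 A)⁻¹ ≤ ⨆ s : Γ, dist (fun j => x j s) (0 : Fin k → AddCircle (1 : ℝ))) ∧
    ShiftExpansive (XA A) :=
  stmt3_general k A hA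
end

section
/- Let Γ be a countable discrete group, 1 ≤ p ≤ ∞, k, n ∈ ℕ, and A ∈ M_{n×k}(ℤΓ). Then the following are equivalent: (i) there exists ε > 0 such that the only x ∈ X_A = {x ∈ ((ℝ/ℤ)^Γ)^k : xA* = 0} for which the function s ↦ ρ_∞(x_s, 0) has ℓ^p-norm less than ε is x = 0 (this condition is the p-expansiveness of the shift action on X_A); (ii) the bounded linear map ℓ^p(Γ, ℝ^k) → ℓ^p(Γ, ℝ^n) sending a to aA* is injective. -/
/-!
STATEMENT 4: For `1 ≤ p ≤ ∞` and `A ∈ M_{n×k}(ℤΓ)`, `p`-expansiveness of the shift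
action on `X_A` is equivalent to injectivity of `a ↦ aA*` on `ℓ^p(Γ, ℝ^k)`.
-/

open scoped Classical ENNReal

namespace Stmt4

variable {Γ : Type*} [Group Γ]

/-- The `ℓ^p`-norm (valued in `ℝ≥0∞`) of a function on `Γ` with values in a normed group;
for `p = ∞` it is the supremum norm. -/
noncomputable def pNorm (p : ℝ≥0∞) {α E : Type*} [NormedAddCommGroup E] (f : α → E) :
    ℝ≥0∞ :=
  if p = ∞ then ⨆ a, (‖f a‖₊ : ℝ≥0∞)
  else (∑' a, (‖f a‖₊ : ℝ≥0∞) ^ p.toReal) ^ (1 / p.toReal)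

/-- The row vector `x A*`, for `x ∈ (M^Γ)^k` (as a `k`-tuple of functions) and
`A ∈ M_{n×k}(ℤΓ)`: `(xA*)_i(s) = ∑_j ∑_u (A i j)(u) • x_j(s u)`. -/
noncomputable def mulStar {k n : ℕ} {M : Type*} [AddCommGroup M]
    (x : Fin k → Γ → M) (A : Matrix (Fin n) (Fin k) (MonoidAlgebra ℤ Γ)) :
    Fin n → Γ → M :=
  fun i s => ∑ j, (A i j).coeff.sum fun u c => c • x j (s * u)

/-- The row vector `a A*` for `a : Γ → ℝ^k` (vector-valued function form). -/
noncomputable def rmulStar {k n : ℕ} {M : Type*} [AddCommGroup M]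
    (a : Γ → Fin k → M) (A : Matrix (Fin n) (Fin k) (MonoidAlgebra ℤ Γ)) :
    Γ → Fin n → M :=
  fun s i => ∑ j, (A i j).coeff.sum fun u c => c • a (s * u) j

/-- The closed shift-invariant subgroup `X_A = {x ∈ ((ℝ/ℤ)^Γ)^k : xA* = 0}`, i.e. the
Pontryagin dual of `(ℤΓ)^k/(ℤΓ)^nA`. -/
def XA {k n : ℕ} (A : Matrix (Fin n) (Fin k) (MonoidAlgebra ℤ Γ)) :
    Set (Fin k → Γ → AddCircle (1 : ℝ)) :=
  {x | mulStar x A = 0}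

end Stmt4

/-!
A real solution `c ∈ ℓ^p` of `cA* = 0`, scaled into a small ball, projects to an `ℓ^p`-small
point of `X_A`, which expansiveness forces to be `0`; since the scaled coordinates are also
below `1/2` in absolute value, they vanish. Conversely, a small `x ∈ X_A` lifts coordinatewise
to `a` with `|a_j(s)| = ‖x_j(s)‖`; the entries of `aA*` are then integers of absolute value
`< 1/2`, so `aA* = 0`, whence `a = 0` and `x = 0`.

`pNorm p` agrees with `eLpNorm · p` for counting measure on `Γ` (with the discrete
`σ`-algebra), and the argument is carried out there.
-/

namespace MeasureTheory

theorem norm_lt_of_eLpNorm_count_lt {α E : Type*} [NormedAddCommGroup E] [MeasurableSpace α]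
    [MeasurableSingletonClass α] {p : ℝ≥0∞} (hp : p ≠ 0) {f : α → E} {r : ℝ}
    (hf : eLpNorm f p Measure.count < ENNReal.ofReal r) (a : α) : ‖f a‖ < r := by
  have h := (enorm_le_eLpNorm_count f a hp).trans_lt hf
  rw [← ofReal_norm] at h
  exact (ENNReal.ofReal_lt_ofReal_iff'.1 h).1

theorem exists_pos_eLpNorm_smul_lt {α E : Type*} [NormedAddCommGroup E] [NormedSpace ℝ E]
    [MeasurableSpace α] {μ : Measure α} {p : ℝ≥0∞} {f : α → E} (hf : eLpNorm f p μ < ∞)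
    {δ : ℝ} (hδ : 0 < δ) : ∃ t : ℝ, 0 < t ∧ eLpNorm (t • f) p μ < ENNReal.ofReal δ := by
  set N := (eLpNorm f p μ).toReal
  have hN : 0 ≤ N := ENNReal.toReal_nonneg
  refine ⟨δ / (N + 1), by positivity, ?_⟩
  rw [eLpNorm_const_smul, ← ENNReal.ofReal_toReal hf.ne, Real.enorm_of_nonneg (by positivity),
    ← ENNReal.ofReal_mul (by positivity), ENNReal.ofReal_lt_ofReal_iff hδ]
  calc δ / (N + 1) * N < δ / (N + 1) * (N + 1) := by gcongr; linarith
    _ = δ := div_mul_cancel₀ _ (by positivity)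

end MeasureTheory

theorem exists_pos_forall_mul_le {ι : Type*} [Finite ι] (f : ι → ℝ) {δ : ℝ} (hδ : 0 < δ) :
    ∃ ε : ℝ, 0 < ε ∧ ∀ i, f i * ε ≤ δ := by
  obtain ⟨C, hC⟩ := Finite.exists_le f
  refine ⟨δ / (|C| + 1), by positivity, fun i => ?_⟩
  calc f i * (δ / (|C| + 1)) ≤ (|C| + 1) * (δ / (|C| + 1)) := by
        gcongr
        exact (hC i).trans ((le_abs_self C).trans (by linarith))
    _ = δ := mul_div_cancel₀ _ (by positivity)

namespace AddCircle

variable {p : ℝ}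

theorem exists_coe_eq_abs_eq_norm (x : AddCircle p) :
    ∃ r : ℝ, (r : AddCircle p) = x ∧ |r| = ‖x‖ := by
  obtain ⟨r, rfl⟩ := QuotientAddGroup.mk_surjective x
  refine ⟨r - round (p⁻¹ * r) * p, ?_, (norm_eq p).symm⟩
  rw [coe_sub, ← zsmul_eq_mul, coe_zsmul, coe_period, smul_zero, sub_zero]

theorem eq_zero_of_coe_eq_zero (hp : p ≠ 0) {r : ℝ} (hr : |r| ≤ |p| / 2)
    (h : (r : AddCircle p) = 0) : r = 0 := by
  have := (norm_coe_eq_abs_iff p hp).2 hr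
  rw [h, norm_zero] at this
  exact abs_eq_zero.1 this.symm

theorem exists_pi_lift {ι : Type*} [Fintype ι] (x : ι → AddCircle p) :
    ∃ v : ι → ℝ, (∀ i, (v i : AddCircle p) = x i) ∧ ‖v‖ = ‖x‖ := by
  choose v hv hnorm using fun i => exists_coe_eq_abs_eq_norm (x i)
  refine ⟨v, hv, ?_⟩
  simp only [Pi.norm_def, ← Real.norm_eq_abs] at hnorm ⊢
  congr 2
  ext i
  exact hnorm i

theorem norm_pi_coe_le {ι : Type*} [Fintype ι] (v : ι → ℝ) :
    ‖fun i => (v i : AddCircle p)‖ ≤ ‖v‖ :=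
  (pi_norm_le_iff_of_nonneg (norm_nonneg v)).2 fun i =>
    QuotientAddGroup.norm_mk_le_norm.trans (norm_le_pi_norm v i)

end AddCircle

namespace Stmt4

open MeasureTheory

theorem pNorm_eq_eLpNorm_count {α E : Type*} [NormedAddCommGroup E] [MeasurableSpace α]
    [MeasurableSingletonClass α] {p : ℝ≥0∞} (hp : p ≠ 0) (f : α → E) :
    pNorm p f = eLpNorm f p Measure.count := by
  unfold pNorm
  split_ifs with h
  · simp [h, eLpNorm_exponent_top, enorm_eq_nnnorm]
  · simp [eLpNorm_eq_lintegral_rpow_enorm_toReal hp h, lintegral_count, enorm_eq_nnnorm]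

section mulStar

variable {Γ : Type*} [Group Γ] {k n : ℕ} (A : Matrix (Fin n) (Fin k) (MonoidAlgebra ℤ Γ))
  {M N : Type*} [AddCommGroup M] [AddCommGroup N]

theorem mulStar_map (φ : M →+ N) (x : Fin k → Γ → M) :
    mulStar (fun j s => φ (x j s)) A = fun i s => φ (mulStar x A i s) := by
  ext i s
  simp only [mulStar, map_sum, map_finsuppSum, map_zsmul]

theorem rmulStar_sub (a b : Γ → Fin k → M) :
    rmulStar (a - b) A = rmulStar a A - rmulStar b A := by
  ext s i
  simp only [rmulStar, Pi.sub_apply, smul_sub, Finsupp.sum_sub, Finset.sum_sub_distrib]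

@[simp]
theorem rmulStar_zero : rmulStar (0 : Γ → Fin k → M) A = 0 := by
  ext s i
  simp [rmulStar]

theorem norm_rmulStar_apply_le {E : Type*} [SeminormedAddCommGroup E] {a : Γ → Fin k → E}
    {C : ℝ} (ha : ∀ s j, ‖a s j‖ ≤ C) (s : Γ) (i : Fin n) :
    ‖rmulStar a A s i‖ ≤ (∑ j, ∑ u ∈ (A i j).coeff.support, ‖(A i j).coeff u‖) * C := by
  calc ‖rmulStar a A s i‖
      ≤ ∑ j, ∑ u ∈ (A i j).coeff.support, ‖(A i j).coeff u • a (s * u) j‖ :=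
        (norm_sum_le _ _).trans (Finset.sum_le_sum fun j _ => norm_sum_le _ _)
    _ ≤ ∑ j, ∑ u ∈ (A i j).coeff.support, ‖(A i j).coeff u‖ * C := by
        gcongr with j _ u _
        exact (norm_zsmul_le _ _).trans (by gcongr; exact ha _ _)
    _ = _ := by simp only [Finset.sum_mul]

end mulStar

variable {Γ : Type*} [Group Γ] [MeasurableSpace Γ] {k n : ℕ}
  (A : Matrix (Fin n) (Fin k) (MonoidAlgebra ℤ Γ)) {p : ℝ≥0∞}

theorem eq_zero_of_expansive [MeasurableSingletonClass Γ] (hp : p ≠ 0) {ε : ℝ} (hε : 0 < ε)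
    (hexp : ∀ x ∈ XA A,
      eLpNorm (fun s => dist (fun j => x j s) (0 : Fin k → AddCircle (1 : ℝ))) p Measure.count
        < ENNReal.ofReal ε → x = 0)
    {c : Γ → Fin k → ℝ} (hc : eLpNorm c p Measure.count < ∞) (hcA : rmulStar c A = 0) :
    c = 0 := by
  obtain ⟨t, ht, htc⟩ := exists_pos_eLpNorm_smul_lt hc (lt_min hε one_half_pos)
  let φ : ℝ →+ AddCircle (1 : ℝ) := (QuotientAddGroup.mk' _).comp (AddMonoidHom.mulLeft t)
  have hx : (fun j s => φ (c s j)) ∈ XA A := by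
    change mulStar _ A = 0
    ext i s
    rw [mulStar_map]
    exact (congrArg φ (congrFun (congrFun hcA s) i)).trans (map_zero φ)
  have hsmall : eLpNorm (fun s => dist (fun j => φ (c s j)) 0) p Measure.count
      < ENNReal.ofReal ε := by
    refine (eLpNorm_mono fun s => ?_).trans_lt
      (htc.trans_le (ENNReal.ofReal_le_ofReal (min_le_left _ _)))
    rw [dist_zero_right, norm_norm]
    exact AddCircle.norm_pi_coe_le ((t • c) s)
  have hx0 := hexp _ hx hsmall
  ext s j
  have htcsj : t * c s j = 0 := by
    refine AddCircle.eq_zero_of_coe_eq_zero one_ne_zero ?_ (congrFun (congrFun hx0 j) s)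
    calc |t * c s j| ≤ ‖(t • c) s‖ := norm_le_pi_norm ((t • c) s) j
      _ ≤ |(1 : ℝ)| / 2 := by
        rw [abs_one]
        exact (norm_lt_of_eLpNorm_count_lt hp htc s).le.trans (min_le_right _ _)
  exact (mul_eq_zero.1 htcsj).resolve_left ht.ne'

theorem expansive_of_ker_rmulStar_trivial [MeasurableSingletonClass Γ] (hp : p ≠ 0)
    (hA : ∀ a : Γ → Fin k → ℝ, eLpNorm a p Measure.count < ∞ → rmulStar a A = 0 → a = 0) :
    ∃ ε : ℝ, 0 < ε ∧ ∀ x ∈ XA A,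
      eLpNorm (fun s => dist (fun j => x j s) (0 : Fin k → AddCircle (1 : ℝ))) p Measure.count
        < ENNReal.ofReal ε → x = 0 := by
  obtain ⟨ε, hε, hεA⟩ := exists_pos_forall_mul_le
    (fun i => ∑ j, ∑ u ∈ (A i j).coeff.support, ‖(A i j).coeff u‖) one_half_pos
  refine ⟨ε, hε, fun x hx hsmall => ?_⟩
  choose a hax ha using fun s => AddCircle.exists_pi_lift (fun j => x j s)
  have hnorm : eLpNorm a p Measure.count
      = eLpNorm (fun s => dist (fun j => x j s) (0 : Fin k → AddCircle (1 : ℝ))) p Measure.count :=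
    eLpNorm_congr_norm_ae (ae_of_all _ fun s => by rw [ha s, dist_zero_right, norm_norm])
  rw [← hnorm] at hsmall
  have hker : rmulStar a A = 0 := by
    ext s i
    refine AddCircle.eq_zero_of_coe_eq_zero one_ne_zero ?_ ?_
    · exact (norm_rmulStar_apply_le A (fun s j =>
        (norm_le_pi_norm (a s) j).trans (norm_lt_of_eLpNorm_count_lt hp hsmall s).le) s i).trans
        ((hεA i).trans_eq (by norm_num))
    · calc ((rmulStar a A s i : ℝ) : AddCircle (1 : ℝ))
          = mulStar (fun j s => ((a s j : ℝ) : AddCircle (1 : ℝ))) A i s :=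
            (congrFun (congrFun (mulStar_map A (QuotientAddGroup.mk' _) fun j s => a s j) i) s).symm
        _ = mulStar x A i s := by simp only [hax]
        _ = 0 := congrFun (congrFun hx i) s
  have ha0 := hA a (hsmall.trans ENNReal.ofReal_lt_top) hker
  ext j s
  rw [← hax s j, ha0]
  rfl

end Stmt4

open Stmt4 in
theorem stmt4 {Γ : Type*} [Group Γ] [Countable Γ] (p : ℝ≥0∞) (hp : 1 ≤ p) (k n : ℕ)
    (A : Matrix (Fin n) (Fin k) (MonoidAlgebra ℤ Γ)) :
    -- (i): `p`-expansiveness of the shift action on `X_A`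
    (∃ ε : ℝ, 0 < ε ∧ ∀ x ∈ XA A,
        pNorm p (fun s : Γ => dist (fun j => x j s) (0 : Fin k → AddCircle (1 : ℝ)))
          < ENNReal.ofReal ε → x = 0) ↔
    -- (ii): injectivity of `a ↦ aA*` on `ℓ^p(Γ, ℝ^k)`
    (∀ a b : Γ → Fin k → ℝ, pNorm p a < ⊤ → pNorm p b < ⊤ →
        rmulStar a A = rmulStar b A → a = b) := by
  let _ : MeasurableSpace Γ := ⊤
  have hp0 : p ≠ 0 := (zero_lt_one.trans_le hp).ne'
  simp only [pNorm_eq_eLpNorm_count hp0]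
  constructor
  · rintro ⟨ε, hε, hexp⟩ a b ha hb hab
    rw [← sub_eq_zero]
    refine eq_zero_of_expansive A hp0 hε hexp ?_ (by rw [rmulStar_sub, hab, sub_self])
    exact (MeasureTheory.eLpNorm_sub_le .of_discrete .of_discrete hp).trans_lt
      (ENNReal.add_lt_top.2 ⟨ha, hb⟩)
  · intro hinj
    exact expansive_of_ker_rmulStar_trivial A hp0 fun a ha haA =>
      hinj a 0 ha (by simp) (by rw [haA, rmulStar_zero])
end

section
/- Let 1 ≤ p < ∞ and let a countable discrete group Γ act on a compact metrizable abelian group X by continuous automorphisms. If the action is p-expansive, then the group Δ^p(X) of p-homoclinic points is countable. -/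
/-!
STATEMENT 6: If an action of a countable group `Γ` on a compact metrizable abelian group
`X` by continuous automorphisms is `p`-expansive (`1 ≤ p < ∞`), then the group `Δ^p(X)`
of `p`-homoclinic points is countable.
-/

open scoped ENNReal

namespace Stmt6

/-- A (continuous) character of a compact abelian group `X`, valued in the unit circle
`𝕋 ⊆ ℂ`. -/
def IsCharacter {X : Type*} [AddCommGroup X] [TopologicalSpace X] (φ : X → ℂ) : Prop :=
  Continuous φ ∧ (∀ x y : X, φ (x + y) = φ x * φ y) ∧ ∀ x : X, ‖φ x‖ = 1

end Stmt6

/-!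
For `x ∈ Δ^p(X)` each `Ψ_{x,φ}` lies in `ℓ^p(Γ)`, realised as `L^p` of counting measure on
`Γ`. For a character `φ`, `Ψ_{x,φ} - Ψ_{y,φ}` has the same pointwise modulus as `Ψ_{x-y,φ}`, so
`p`-expansiveness says exactly that `x ↦ (Ψ_{x,φ})_{φ ∈ W}` is a uniformly separated map from
`Δ^p(X)` into `ℓ^p(Γ)^W`. Since `Γ` is countable this target is separable, and a uniformly
separated family in a separable space is countable.
-/

open MeasureTheory Measure ENNReal

theorem Pairwise.countable_of_le_edist {α E : Type*} [PseudoEMetricSpace E]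
    [TopologicalSpace.SeparableSpace E] (f : α → E) {δ : ℝ≥0∞} (hδ : δ ≠ 0)
    (h : Pairwise fun a b => δ ≤ edist (f a) (f b)) : Countable α := by
  refine Pairwise.countable_of_isOpen_disjoint (s := fun a => Metric.eball (f a) (δ / 2))
    (fun a b hab => Metric.eball_disjoint ?_) (fun _ => Metric.isOpen_eball)
    (fun a => ⟨f a, Metric.mem_eball_self (ENNReal.half_pos hδ)⟩)
  rw [ENNReal.add_halves]
  exact h hab

theorem sum_edist_le_card_mul_edist {ι : Type*} [Fintype ι] {E : ι → Type*}
    [∀ i, PseudoEMetricSpace (E i)] (f g : ∀ i, E i) :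
    ∑ i, edist (f i) (g i) ≤ Fintype.card ι * edist f g := by
  simpa using Finset.sum_le_card_nsmul Finset.univ _ _ fun i _ => edist_le_pi_edist f g i

section Count

variable {α E : Type*} [MeasurableSpace α] [MeasurableSingletonClass α] [NormedAddCommGroup E]
  {p : ℝ}

theorem eLpNorm_count_eq_tsum_rpow (hp : 0 < p) (f : α → E) :
    eLpNorm f (ENNReal.ofReal p) count = (∑' a, ‖f a‖ₑ ^ p) ^ (1 / p) := by
  rw [eLpNorm_eq_lintegral_rpow_enorm_toReal (by simpa using hp) ofReal_ne_top,
    toReal_ofReal hp.le, lintegral_count]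

theorem memLp_count_of_summable_rpow [Countable α] (hp : 0 < p) {f : α → E}
    (hf : Summable fun a => ‖f a‖ ^ p) : MemLp f (ENNReal.ofReal p) count := by
  refine ⟨.of_discrete, ?_⟩
  have hsum : ∑' a, ‖f a‖ₑ ^ p ≠ ∞ := by
    simp_rw [← ofReal_norm, ENNReal.ofReal_rpow_of_nonneg (norm_nonneg _) hp.le]
    rw [← ENNReal.ofReal_tsum_of_nonneg (fun a => by positivity) hf]
    exact ofReal_ne_top
  rw [eLpNorm_count_eq_tsum_rpow hp]
  exact ENNReal.rpow_lt_top_of_nonneg (by positivity) hsum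

end Count

namespace Stmt6

theorem IsCharacter.norm_sub_eq_norm_map_sub_sub_one {X : Type*} [AddCommGroup X]
    [TopologicalSpace X] {φ : X → ℂ} (hφ : IsCharacter φ) (a b : X) :
    ‖φ a - φ b‖ = ‖φ (a - b) - 1‖ := by
  obtain ⟨-, hmul, hnorm⟩ := hφ
  calc ‖φ a - φ b‖ = ‖(φ (a - b) - 1) * φ b‖ := by
        rw [sub_one_mul, ← hmul, sub_add_cancel]
    _ = ‖φ (a - b) - 1‖ := by rw [norm_mul, hnorm, mul_one]

section Homoclinic

variable {Γ X : Type*} [Monoid Γ] [AddCommGroup X] [DistribMulAction Γ X]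

def psi (x : X) (φ : X → ℂ) (s : Γ) : ℂ := φ (s • x) - 1

theorem norm_psi_sub [TopologicalSpace X] {φ : X → ℂ} (hφ : IsCharacter φ) (x y : X)
    (s : Γ) :
    ‖psi (x - y) φ s‖ = ‖psi x φ s - psi y φ s‖ := by
  rw [psi, psi, psi, sub_sub_sub_cancel_right, hφ.norm_sub_eq_norm_map_sub_sub_one, smul_sub]

theorem edist_toLp_psi [TopologicalSpace X] [MeasurableSpace Γ] {p : ℝ≥0∞} [Fact (1 ≤ p)]
    {φ : X → ℂ} (hφ : IsCharacter φ) {x y : X} (hx : MemLp (psi x φ) p (count : Measure Γ))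
    (hy : MemLp (psi y φ) p (count : Measure Γ)) :
    edist hx.toLp hy.toLp = eLpNorm (psi (x - y) φ : Γ → ℂ) p count := by
  rw [Lp.edist_toLp_toLp]
  exact eLpNorm_congr_norm_ae (ae_of_all _ fun s => (norm_psi_sub hφ x y s).symm)

end Homoclinic

end Stmt6

open Stmt6 in
theorem stmt6_general {Γ : Type*} [Group Γ] [Countable Γ]
    {X : Type*} [AddCommGroup X] [TopologicalSpace X]
    [DistribMulAction Γ X]
    (p : ℝ) (hp : 1 ≤ p)
    -- `p`-expansiveness: there are a finite set `W` of characters and `ε > 0` such that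
    -- the only `x ∈ X` with `∑_{φ ∈ W} ‖Ψ_{x,φ}‖_p < ε` is `x = 0`.
    (hexp : ∃ W : Finset (X → ℂ), (∀ φ ∈ W, IsCharacter φ) ∧
      ∃ ε : ℝ, 0 < ε ∧ ∀ x : X,
        (∑ φ ∈ W, (∑' s : Γ, (‖φ (s • x) - 1‖₊ : ℝ≥0∞) ^ p) ^ (1 / p))
          < ENNReal.ofReal ε → x = 0) :
    -- `Δ^p(X)` is countable
    Set.Countable {x : X | ∀ φ : X → ℂ, IsCharacter φ →
      Summable fun s : Γ => ‖φ (s • x) - 1‖ ^ p} := by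
  obtain ⟨W, hW, ε, hε, hexp⟩ := hexp
  let _ : MeasurableSpace Γ := ⊤
  have hp0 : 0 < p := zero_lt_one.trans_le hp
  have : Fact (1 ≤ ENNReal.ofReal p) := ⟨by simpa using hp⟩
  have : Fact (ENNReal.ofReal p ≠ ∞) := ⟨ofReal_ne_top⟩
  set Δ := {x : X | ∀ φ : X → ℂ, IsCharacter φ →
    Summable fun s : Γ => ‖φ (s • x) - 1‖ ^ p}
  let G (x : Δ) (φ : W) : Lp ℂ (ENNReal.ofReal p) (count : Measure Γ) :=
    (memLp_count_of_summable_rpow (f := psi x.1 φ) hp0 (x.2 φ (hW φ φ.2))).toLp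
  have hsep : Pairwise fun x y : Δ => ENNReal.ofReal ε ≤ W.card * edist (G x) (G y) := by
    intro x y hxy
    calc ENNReal.ofReal ε
        ≤ ∑ φ ∈ W, eLpNorm (psi (x.1 - y.1) φ : Γ → ℂ) (ENNReal.ofReal p) count := by
          contrapose! hxy
          refine Subtype.ext (sub_eq_zero.mp (hexp _ ?_))
          simp only [eLpNorm_count_eq_tsum_rpow hp0] at hxy
          exact hxy
      _ = ∑ φ : W, edist (G x φ) (G y φ) := by
          rw [← Finset.sum_coe_sort W]
          exact Finset.sum_congr rfl fun φ _ => (edist_toLp_psi (hW φ φ.2) _ _).symm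
      _ ≤ W.card * edist (G x) (G y) := by
          simpa using sum_edist_le_card_mul_edist (G x) (G y)
  -- dividing by `#W + 1` rather than `#W` keeps the radius positive when `W = ∅`
  have hδ : ENNReal.ofReal ε / (W.card + 1) ≠ 0 := by simp [hε]
  refine Set.countable_coe_iff.mp (Pairwise.countable_of_le_edist G hδ fun x y hxy => ?_)
  refine ENNReal.div_le_of_le_mul ((hsep hxy).trans ?_)
  rw [mul_comm]
  gcongr
  exact le_self_add

open Stmt6 in
theorem stmt6 {Γ : Type*} [Group Γ] [Countable Γ]
    {X : Type*} [AddCommGroup X] [TopologicalSpace X] [IsTopologicalAddGroup X]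
    [CompactSpace X] [TopologicalSpace.MetrizableSpace X]
    [DistribMulAction Γ X] (hcont : ∀ s : Γ, Continuous fun x : X => s • x)
    (p : ℝ) (hp : 1 ≤ p)
    -- `p`-expansiveness: there are a finite set `W` of characters and `ε > 0` such that
    -- the only `x ∈ X` with `∑_{φ ∈ W} ‖Ψ_{x,φ}‖_p < ε` is `x = 0`.
    (hexp : ∃ W : Finset (X → ℂ), (∀ φ ∈ W, IsCharacter φ) ∧
      ∃ ε : ℝ, 0 < ε ∧ ∀ x : X,
        (∑ φ ∈ W, (∑' s : Γ, (‖φ (s • x) - 1‖₊ : ℝ≥0∞) ^ p) ^ (1 / p))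
          < ENNReal.ofReal ε → x = 0) :
    -- `Δ^p(X)` is countable
    Set.Countable {x : X | ∀ φ : X → ℂ, IsCharacter φ →
      Summable fun s : Γ => ‖φ (s • x) - 1‖ ^ p} :=
  stmt6_general p hp hexp
end

section
/- Let 1 ≤ p < ∞, let Γ be a countable discrete group, k, n ∈ ℕ, and A ∈ M_{n×k}(ℤΓ). Suppose the linear map ℓ^p(Γ, ℝ^k) → ℓ^p(Γ, ℝ^n) sending a to aA* is injective (i.e. the shift action on X_A is p-expansive). Then there is an injective Γ-equivariant group homomorphism from Δ^p(X_A) into the left ℤΓ-module (ℤΓ)^n/(ℤΓ)^kA*; that is, Δ^p(X_A) is isomorphic as a left ℤΓ-module to a ℤΓ-submodule of (ℤΓ)^n/(ℤΓ)^kA*. -/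
/-!
STATEMENT 7: If the shift action on `X_A` is `p`-expansive (i.e. `a ↦ aA*` is injective
on `ℓ^p(Γ, ℝ^k)`, `1 ≤ p < ∞`), then `Δ^p(X_A)` embeds, by an injective `Γ`-equivariant
group homomorphism, into the left `ℤΓ`-module `(ℤΓ)^n/(ℤΓ)^kA*`.
-/

open scoped Classical

namespace Stmt7

variable {Γ : Type*} [Group Γ]

/-- The row vector `x A*`, for `x ∈ (M^Γ)^k` and `A ∈ M_{n×k}(ℤΓ)`. -/
noncomputable def mulStar {k n : ℕ} {M : Type*} [AddCommGroup M]
    (x : Fin k → Γ → M) (A : Matrix (Fin n) (Fin k) (MonoidAlgebra ℤ Γ)) :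
    Fin n → Γ → M :=
  fun i s => ∑ j, (A i j).coeff.sum fun u c => c • x j (s * u)

/-- The row vector `a A*` for a vector-valued function `a : Γ → M^k`. -/
noncomputable def rmulStar {k n : ℕ} {M : Type*} [AddCommGroup M]
    (a : Γ → Fin k → M) (A : Matrix (Fin n) (Fin k) (MonoidAlgebra ℤ Γ)) :
    Γ → Fin n → M :=
  fun s i => ∑ j, (A i j).coeff.sum fun u c => c • a (s * u) j

/-- The involution `g ↦ g*` of the integral group ring, `(∑ g_s s)* = ∑ g_s s⁻¹`. -/
noncomputable def star' (g : MonoidAlgebra ℤ Γ) : MonoidAlgebra ℤ Γ :=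
  MonoidAlgebra.ofCoeff (Finsupp.mapDomain (fun u => u⁻¹) g.coeff)

/-- The closed shift-invariant subgroup `X_A = {x ∈ ((ℝ/ℤ)^Γ)^k : xA* = 0}`. -/
def XA {k n : ℕ} (A : Matrix (Fin n) (Fin k) (MonoidAlgebra ℤ Γ)) :
    Set (Fin k → Γ → AddCircle (1 : ℝ)) :=
  {x | mulStar x A = 0}

/-- The group `Δ^p(X_A)` of `p`-homoclinic points of `X_A`: points `x ∈ X_A` such that
`s ↦ ρ_∞(x_s, 0)` lies in `ℓ^p(Γ)`. -/
def DeltaP {k n : ℕ} (A : Matrix (Fin n) (Fin k) (MonoidAlgebra ℤ Γ)) (p : ℝ) :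
    Set (Fin k → Γ → AddCircle (1 : ℝ)) :=
  {x | x ∈ XA A ∧
    Summable fun s : Γ => dist (fun j => x j s) (0 : Fin k → AddCircle (1 : ℝ)) ^ p}

/-- The image `(ℤΓ)^k A*` of `(ℤΓ)^k` inside `(ℤΓ)^n` under `b ↦ bA*`, as an additive
subgroup (it is in fact a left `ℤΓ`-submodule). -/
noncomputable def imStar {k n : ℕ} (A : Matrix (Fin n) (Fin k) (MonoidAlgebra ℤ Γ)) :
    AddSubgroup (Fin n → MonoidAlgebra ℤ Γ) :=
  AddSubgroup.closure
    {v | ∃ b : Fin k → MonoidAlgebra ℤ Γ, v = fun i => ∑ j, b j * star' (A i j)}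

/-- The left shift action of `Γ` on `((ℝ/ℤ)^Γ)^k` (dual to left multiplication). -/
def shift {k : ℕ} {M : Type*} (s : Γ) (x : Fin k → Γ → M) : Fin k → Γ → M :=
  fun j t => x j (s⁻¹ * t)

end Stmt7

/-!
Lift a `p`-homoclinic point `x` to the real array `x̃` with entries in `[-1/2, 1/2)`. Since
`xA* = 0` the array `x̃A*` is integer valued, and since `x̃` vanishes at infinity so does `x̃A*`;
hence `x̃A*` lies in `(ℤΓ)^n`, and `x ↦ [x̃A*]` is the embedding. Two lifts of the same point
differ by an integer array vanishing at infinity, i.e. by some `b ∈ (ℤΓ)^k`, which changes `x̃A*`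
only by `bA*`: this gives additivity and equivariance. Conversely, if `x̃A* - ỹA* = bA*`, then `x̃`
and `ỹ + b` lie in `ℓ^p` and have the same image under `a ↦ aA*`, so `x̃ = ỹ + b` and `x = y`.
-/

namespace Stmt7

open Filter Topology

variable {Γ : Type*} {k m n : ℕ}

lemma tendsto_zero_of_tendsto_rpow {α : Type*} {l : Filter α} {f : α → ℝ} {p : ℝ} (hp : 0 < p)
    (hf : ∀ a, 0 ≤ f a) (h : Tendsto (fun a => f a ^ p) l (𝓝 0)) : Tendsto f l (𝓝 0) := by
  have hc := (Real.continuousAt_rpow_const 0 p⁻¹ (Or.inr (inv_pos.2 hp).le)).tendsto.comp h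
  rw [Real.zero_rpow (inv_ne_zero hp.ne')] at hc
  refine hc.congr fun a => ?_
  simp [← Real.rpow_mul (hf a), mul_inv_cancel₀ hp.ne']

lemma intCast_round_of_coe_eq_zero {r : ℝ} (h : (r : AddCircle (1 : ℝ)) = 0) :
    ((round r : ℤ) : ℝ) = r := by
  obtain ⟨m, rfl⟩ := (AddCircle.coe_eq_zero_iff (1 : ℝ)).1 h
  simp

lemma eventually_round_eq_zero {α : Type*} {l : Filter α} {v : α → ℝ} (h : Tendsto v l (𝓝 0)) :
    ∀ᶠ s in l, round (v s) = 0 := by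
  filter_upwards [h (Ioo_mem_nhds (by norm_num : (-(1 / 2) : ℝ) < 0) one_half_pos)] with s hs
  exact round_eq_zero_iff.2 ⟨hs.1.le, hs.2⟩

noncomputable def liftIco (z : AddCircle (1 : ℝ)) : ℝ :=
  AddCircle.equivIco 1 (-(1 / 2)) z

@[simp]
lemma coe_liftIco (z : AddCircle (1 : ℝ)) : ((liftIco z : ℝ) : AddCircle (1 : ℝ)) = z :=
  (AddCircle.equivIco 1 (-(1 / 2))).symm_apply_apply z

lemma abs_liftIco (z : AddCircle (1 : ℝ)) : |liftIco z| = ‖z‖ := by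
  have hmem := (AddCircle.equivIco 1 (-(1 / 2)) z).2
  norm_num at hmem
  conv_rhs => rw [← coe_liftIco z]
  refine ((AddCircle.norm_coe_eq_abs_iff (p := 1) one_ne_zero).2 ?_).symm
  rw [abs_le]
  exact ⟨by norm_num [liftIco]; linarith [hmem.1], by norm_num [liftIco]; linarith [hmem.2]⟩

noncomputable def realLift (x : Fin k → Γ → AddCircle (1 : ℝ)) : Fin k → Γ → ℝ :=
  fun j s => liftIco (x j s)

lemma tendsto_realLift {x : Fin k → Γ → AddCircle (1 : ℝ)}
    (hx : ∀ j, Tendsto (x j) cofinite (𝓝 0)) (j : Fin k) :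
    Tendsto (realLift x j) cofinite (𝓝 0) := by
  rw [tendsto_zero_iff_norm_tendsto_zero]
  simpa only [realLift, Real.norm_eq_abs, abs_liftIco] using
    (tendsto_zero_iff_norm_tendsto_zero.1 (hx j))

lemma norm_realLift (x : Fin k → Γ → AddCircle (1 : ℝ)) (s : Γ) :
    ‖fun j => realLift x j s‖ = ‖fun j => x j s‖ := by
  simp only [Pi.norm_def, realLift]
  congr 2
  funext j
  rw [← NNReal.coe_inj, coe_nnnorm, coe_nnnorm, Real.norm_eq_abs, abs_liftIco]

section mulStar

variable [Group Γ] {M M' : Type*} [AddCommGroup M] [AddCommGroup M']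
  (A : Matrix (Fin n) (Fin k) (MonoidAlgebra ℤ Γ))

lemma map_mulStar (φ : M →+ M') (x : Fin k → Γ → M) (i : Fin n) (s : Γ) :
    φ (mulStar x A i s) = mulStar (fun j t => φ (x j t)) A i s := by
  simp only [mulStar, map_sum, map_finsuppSum, map_zsmul]

lemma mulStar_add (x y : Fin k → Γ → M) : mulStar (x + y) A = mulStar x A + mulStar y A := by
  funext i s
  simp only [mulStar, Pi.add_apply, smul_add, Finsupp.sum_add, Finset.sum_add_distrib]

lemma mulStar_sub (x y : Fin k → Γ → M) : mulStar (x - y) A = mulStar x A - mulStar y A := by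
  funext i s
  simp only [mulStar, Pi.sub_apply, smul_sub, Finsupp.sum_sub, Finset.sum_sub_distrib]

lemma mulStar_shift (s : Γ) (x : Fin k → Γ → M) :
    mulStar (shift s x) A = shift s (mulStar x A) := by
  funext i t
  simp [mulStar, shift, mul_assoc]

end mulStar

noncomputable def ofFun (f : Γ → ℤ) : MonoidAlgebra ℤ Γ :=
  if h : (Function.support f).Finite then MonoidAlgebra.ofCoeff (Finsupp.ofSupportFinite f h)
  else 0

lemma coeff_ofFun {f : Γ → ℤ} (h : (Function.support f).Finite) : ⇑(ofFun f).coeff = f := by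
  rw [ofFun, dif_pos h]
  rfl

noncomputable def realCoeffs : (Fin m → MonoidAlgebra ℤ Γ) →+ (Fin m → Γ → ℝ) where
  toFun v i t := (v i).coeff t
  map_zero' := by ext; simp
  map_add' _ _ := by ext; simp

lemma realCoeffs_apply (v : Fin m → MonoidAlgebra ℤ Γ) (i : Fin m) (t : Γ) :
    realCoeffs v i t = (v i).coeff t :=
  rfl

lemma realCoeffs_injective : Function.Injective (realCoeffs : (Fin m → MonoidAlgebra ℤ Γ) → _) :=
  fun _ _ h => funext fun i => MonoidAlgebra.ext <| Finsupp.ext fun t =>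
    Int.cast_injective (α := ℝ) (congrFun (congrFun h i) t)

lemma eventually_realCoeffs_eq_zero (v : Fin m → MonoidAlgebra ℤ Γ) :
    ∀ᶠ t in cofinite, ∀ i, realCoeffs v i t = 0 := by
  refine (Set.finite_iUnion fun i => (v i).coeff.support.finite_toSet).eventually_cofinite_notMem
    |>.mono fun t ht i => ?_
  rw [realCoeffs_apply, Finsupp.notMem_support_iff.1 fun h => ht (Set.mem_iUnion.2 ⟨i, h⟩),
    Int.cast_zero]

lemma realCoeffs_ofFun_round {d : Fin m → Γ → ℝ} (hint : ∀ i t, ((round (d i t) : ℤ) : ℝ) = d i t)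
    (h0 : ∀ i, Tendsto (d i) cofinite (𝓝 0)) :
    realCoeffs (fun i => ofFun fun t => round (d i t)) = d := by
  funext i t
  rw [realCoeffs_apply, coeff_ofFun (eventually_round_eq_zero (h0 i)), hint]

section group

variable [Group Γ] (A : Matrix (Fin n) (Fin k) (MonoidAlgebra ℤ Γ))

lemma realCoeffs_sum_mul_star' (b : Fin k → MonoidAlgebra ℤ Γ) :
    realCoeffs (fun i => ∑ j, b j * star' (A i j)) = mulStar (realCoeffs b) A := by
  funext i t
  have hstar : ∀ g : MonoidAlgebra ℤ Γ,
      star' g = g.coeff.sum fun u c => MonoidAlgebra.single u⁻¹ c := fun g => by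
    simp [star', Finsupp.mapDomain]
  simp only [realCoeffs_apply, MonoidAlgebra.coeff_sum, Finsupp.finsetSum_apply, hstar,
    Finsupp.sum, Finset.mul_sum, MonoidAlgebra.coeff_mul_single_apply, inv_inv, mulStar,
    Int.cast_sum, Int.cast_mul, zsmul_eq_mul, mul_comm]

lemma realCoeffs_single_mul (s : Γ) (v : Fin m → MonoidAlgebra ℤ Γ) :
    realCoeffs (fun i => MonoidAlgebra.single s (1 : ℤ) * v i) = shift s (realCoeffs v) := by
  funext i t
  simp [realCoeffs_apply, shift]

lemma mem_imStar {v : Fin n → MonoidAlgebra ℤ Γ} :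
    v ∈ imStar A ↔ ∃ b : Fin k → MonoidAlgebra ℤ Γ, v = fun i => ∑ j, b j * star' (A i j) := by
  refine ⟨fun h => ?_, fun h => AddSubgroup.subset_closure h⟩
  induction h using AddSubgroup.closure_induction with
  | mem v hv => exact hv
  | zero => exact ⟨0, by funext i; simp⟩
  | add v w _ _ hv hw =>
    obtain ⟨b, rfl⟩ := hv
    obtain ⟨c, rfl⟩ := hw
    exact ⟨b + c, by funext i; simp [add_mul, Finset.sum_add_distrib]⟩
  | neg v _ hv =>
    obtain ⟨b, rfl⟩ := hv
    exact ⟨-b, by funext i; simp [Finset.sum_neg_distrib]⟩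

lemma smul_mem_imStar (g : MonoidAlgebra ℤ Γ) {v : Fin n → MonoidAlgebra ℤ Γ}
    (hv : v ∈ imStar A) : g • v ∈ imStar A := by
  obtain ⟨b, rfl⟩ := (mem_imStar A).1 hv
  exact (mem_imStar A).2 ⟨fun j => g * b j, by funext i; simp [Finset.mul_sum, mul_assoc]⟩

lemma coe_mulStar_realLift (x : Fin k → Γ → AddCircle (1 : ℝ)) (i : Fin n) (s : Γ) :
    ((mulStar (realLift x) A i s : ℝ) : AddCircle (1 : ℝ)) = mulStar x A i s := by
  simpa [realLift] using
    map_mulStar A (QuotientAddGroup.mk' (AddSubgroup.zmultiples (1 : ℝ))) (realLift x) i s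

lemma tendsto_mulStar {a : Fin k → Γ → ℝ} (ha : ∀ j, Tendsto (a j) cofinite (𝓝 0)) (i : Fin n) :
    Tendsto (mulStar a A i) cofinite (𝓝 0) := by
  have hterm : ∀ j u, Tendsto (fun s => (A i j).coeff u • a j (s * u)) cofinite (𝓝 0) :=
    fun j u => by
      simpa only [smul_zero, Function.comp_def] using
        ((ha j).comp (mul_left_injective u).tendsto_cofinite).const_smul ((A i j).coeff u)
  have hsum := tendsto_finsetSum Finset.univ fun j _ =>
    tendsto_finsetSum (A i j).coeff.support fun u _ => hterm j u
  simp only [Finset.sum_const_zero] at hsum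
  exact hsum

noncomputable def homoclinicVec (x : Fin k → Γ → AddCircle (1 : ℝ)) :
    Fin n → MonoidAlgebra ℤ Γ :=
  fun i => ofFun fun s => round (mulStar (realLift x) A i s)

variable {A}

lemma realCoeffs_homoclinicVec {x : Fin k → Γ → AddCircle (1 : ℝ)} (hx : x ∈ XA A)
    (hx0 : ∀ j, Tendsto (x j) cofinite (𝓝 0)) :
    realCoeffs (homoclinicVec A x) = mulStar (realLift x) A := by
  refine realCoeffs_ofFun_round (fun i s => intCast_round_of_coe_eq_zero ?_)
    (tendsto_mulStar A (tendsto_realLift hx0))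
  rw [coe_mulStar_realLift]
  exact congrFun (congrFun hx i) s

lemma homoclinicVec_add_sub_mem {x y : Fin k → Γ → AddCircle (1 : ℝ)} (hx : x ∈ XA A)
    (hy : y ∈ XA A) (hx0 : ∀ j, Tendsto (x j) cofinite (𝓝 0))
    (hy0 : ∀ j, Tendsto (y j) cofinite (𝓝 0)) :
    homoclinicVec A (x + y) - (homoclinicVec A x + homoclinicVec A y) ∈ imStar A := by
  have hxy : x + y ∈ XA A := by
    change mulStar (x + y) A = 0
    rw [mulStar_add, hx.out, hy.out, add_zero]
  have hxy0 : ∀ j, Tendsto ((x + y) j) cofinite (𝓝 0) := fun j => by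
    have h := (hx0 j).add (hy0 j)
    rwa [add_zero] at h
  set d := realLift (x + y) - (realLift x + realLift y) with hd
  have hd_int : ∀ j s, ((round (d j s) : ℤ) : ℝ) = d j s := fun j s =>
    intCast_round_of_coe_eq_zero (by simp [d, realLift])
  have hd0 : ∀ j, Tendsto (d j) cofinite (𝓝 0) := fun j => by
    have h := (tendsto_realLift hxy0 j).sub ((tendsto_realLift hx0 j).add (tendsto_realLift hy0 j))
    rwa [add_zero, sub_zero] at h
  refine (mem_imStar A).2 ⟨fun j => ofFun fun s => round (d j s), realCoeffs_injective ?_⟩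
  rw [realCoeffs_sum_mul_star', realCoeffs_ofFun_round hd_int hd0, map_sub, map_add,
    realCoeffs_homoclinicVec hxy hxy0, realCoeffs_homoclinicVec hx hx0,
    realCoeffs_homoclinicVec hy hy0, hd, mulStar_sub, mulStar_add]

lemma shift_mem_XA (s : Γ) {x : Fin k → Γ → AddCircle (1 : ℝ)} (hx : x ∈ XA A) :
    shift s x ∈ XA A := by
  change mulStar (shift s x) A = 0
  rw [mulStar_shift, hx.out]
  rfl

lemma homoclinicVec_shift (s : Γ) {x : Fin k → Γ → AddCircle (1 : ℝ)} (hx : x ∈ XA A)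
    (hx0 : ∀ j, Tendsto (x j) cofinite (𝓝 0)) :
    homoclinicVec A (shift s x) =
      fun i => MonoidAlgebra.single s (1 : ℤ) * homoclinicVec A x i := by
  have hsx0 : ∀ j, Tendsto (shift s x j) cofinite (𝓝 0) := fun j =>
    (hx0 j).comp (mul_right_injective s⁻¹).tendsto_cofinite
  apply realCoeffs_injective
  rw [realCoeffs_single_mul, realCoeffs_homoclinicVec (shift_mem_XA s hx) hsx0,
    realCoeffs_homoclinicVec hx hx0, ← mulStar_shift]
  rfl

lemma tendsto_of_mem_DeltaP {p : ℝ} (hp : 0 < p) {x : Fin k → Γ → AddCircle (1 : ℝ)}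
    (hx : x ∈ DeltaP A p) (j : Fin k) : Tendsto (x j) cofinite (𝓝 0) := by
  have h := tendsto_zero_of_tendsto_rpow hp (fun _ => dist_nonneg) hx.2.tendsto_cofinite_zero
  exact tendsto_pi_nhds.1 (tendsto_iff_dist_tendsto_zero.2 h) j

lemma summable_norm_realLift_rpow {p : ℝ} {x : Fin k → Γ → AddCircle (1 : ℝ)}
    (hx : x ∈ DeltaP A p) : Summable fun s => ‖fun j => realLift x j s‖ ^ p := by
  simpa only [norm_realLift, dist_zero_right] using hx.2

variable (A) in
def LpInjective (p : ℝ) : Prop :=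
  ∀ a b : Γ → Fin k → ℝ, Summable (fun s => ‖a s‖ ^ p) →
    Summable (fun s => ‖b s‖ ^ p) → rmulStar a A = rmulStar b A → a = b

lemma eq_of_homoclinicVec_sub_mem {p : ℝ} (hp : 0 < p) (hA : LpInjective A p)
    {x y : Fin k → Γ → AddCircle (1 : ℝ)} (hx : x ∈ DeltaP A p) (hy : y ∈ DeltaP A p)
    (h : homoclinicVec A x - homoclinicVec A y ∈ imStar A) : x = y := by
  obtain ⟨b, hb⟩ := (mem_imStar A).1 h
  set a := realLift y + realCoeffs b with ha
  have hmul : mulStar (realLift x) A = mulStar a A := by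
    rw [ha, mulStar_add, ← realCoeffs_sum_mul_star', ← hb, map_sub,
      realCoeffs_homoclinicVec hx.1 (tendsto_of_mem_DeltaP hp hx),
      realCoeffs_homoclinicVec hy.1 (tendsto_of_mem_DeltaP hp hy), add_sub_cancel]
  have ha_summable : Summable fun s => ‖fun j => a j s‖ ^ p :=
    (summable_norm_realLift_rpow hy).congr_cofinite <|
      (eventually_realCoeffs_eq_zero b).mono fun s hs => by simp [ha, hs]
  have hlift := hA (fun s j => realLift x j s) (fun s j => a j s)
    (summable_norm_realLift_rpow hx) ha_summable
    (funext fun s => funext fun i => congrFun (congrFun hmul i) s)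
  funext j s
  have hjs : realLift x j s = realLift y j s + ((b j).coeff s : ℝ) :=
    congrFun (congrFun hlift s) j
  calc x j s = ((realLift x j s : ℝ) : AddCircle (1 : ℝ)) := (coe_liftIco _).symm
    _ = y j s := by rw [hjs, AddCircle.coe_add]; simp [realLift]

end group

end Stmt7

open Stmt7 in
theorem stmt7_general {Γ : Type*} [Group Γ] (p : ℝ) (hp : 1 ≤ p) (k n : ℕ)
    (A : Matrix (Fin n) (Fin k) (MonoidAlgebra ℤ Γ))
    -- hypothesis: `a ↦ aA*` is injective on `ℓ^p(Γ, ℝ^k)`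
    (hinj : ∀ a b : Γ → Fin k → ℝ, Summable (fun s => ‖a s‖ ^ p) →
      Summable (fun s => ‖b s‖ ^ p) → rmulStar a A = rmulStar b A → a = b) :
    -- conclusion: an injective `Γ`-equivariant group homomorphism
    -- `Δ^p(X_A) → (ℤΓ)^n/(ℤΓ)^kA*`
    ∃ Φ : (Fin k → Γ → AddCircle (1 : ℝ)) →
        (Fin n → MonoidAlgebra ℤ Γ) ⧸ imStar A,
      Set.InjOn Φ (DeltaP A p) ∧
      (∀ x ∈ DeltaP A p, ∀ y ∈ DeltaP A p, Φ (x + y) = Φ x + Φ y) ∧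
      (∀ s : Γ, ∀ x ∈ DeltaP A p, ∀ v : Fin n → MonoidAlgebra ℤ Γ,
        Φ x = QuotientAddGroup.mk v →
          Φ (shift s x) = QuotientAddGroup.mk
            (fun i => MonoidAlgebra.single s (1 : ℤ) * v i)) := by
  have hp0 : 0 < p := by linarith
  refine ⟨fun x => QuotientAddGroup.mk (homoclinicVec A x), ?_, ?_, ?_⟩
  · intro x hx y hy hxy
    exact eq_of_homoclinicVec_sub_mem hp0 hinj hx hy (QuotientAddGroup.eq_iff_sub_mem.1 hxy)
  · intro x hx y hy
    rw [← QuotientAddGroup.mk_add, QuotientAddGroup.eq_iff_sub_mem]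
    exact homoclinicVec_add_sub_mem hx.1 hy.1 (tendsto_of_mem_DeltaP hp0 hx)
      (tendsto_of_mem_DeltaP hp0 hy)
  · intro s x hx v hv
    dsimp only at hv ⊢
    rw [homoclinicVec_shift s hx.1 (tendsto_of_mem_DeltaP hp0 hx),
      QuotientAddGroup.eq_iff_sub_mem]
    have h := smul_mem_imStar A (MonoidAlgebra.single s 1) (QuotientAddGroup.eq_iff_sub_mem.1 hv)
    rwa [smul_sub] at h

open Stmt7 in
theorem stmt7 {Γ : Type*} [Group Γ] [Countable Γ] (p : ℝ) (hp : 1 ≤ p) (k n : ℕ)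
    (A : Matrix (Fin n) (Fin k) (MonoidAlgebra ℤ Γ))
    -- hypothesis: `a ↦ aA*` is injective on `ℓ^p(Γ, ℝ^k)`
    (hinj : ∀ a b : Γ → Fin k → ℝ, Summable (fun s => ‖a s‖ ^ p) →
      Summable (fun s => ‖b s‖ ^ p) → rmulStar a A = rmulStar b A → a = b) :
    -- conclusion: an injective `Γ`-equivariant group homomorphism
    -- `Δ^p(X_A) → (ℤΓ)^n/(ℤΓ)^kA*`
    ∃ Φ : (Fin k → Γ → AddCircle (1 : ℝ)) →
        (Fin n → MonoidAlgebra ℤ Γ) ⧸ imStar A,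
      Set.InjOn Φ (DeltaP A p) ∧
      (∀ x ∈ DeltaP A p, ∀ y ∈ DeltaP A p, Φ (x + y) = Φ x + Φ y) ∧
      (∀ s : Γ, ∀ x ∈ DeltaP A p, ∀ v : Fin n → MonoidAlgebra ℤ Γ,
        Φ x = QuotientAddGroup.mk v →
          Φ (shift s x) = QuotientAddGroup.mk
            (fun i => MonoidAlgebra.single s (1 : ℤ) * v i)) :=
  stmt7_general p hp k n A hinj
end

section
/- Let a countable discrete group Γ act expansively and continuously on a compact metric space (X, ρ), and let d > 0 be an expansiveness constant, i.e. whenever x, y ∈ X satisfy sup_{s∈Γ} ρ(sx, sy) ≤ d one has x = y. If x, y ∈ X satisfy ρ(sx, sy) ≤ d for all but finitely many s ∈ Γ, then (x, y) is an asymptotic pair: ρ(sx, sy) → 0 along the cofinite filter on Γ. -/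
/-!
The cluster points of the orbit `s ↦ s • (x, y)` in `X × X` along the cofinite filter form a
`Γ`-invariant set, because left translation preserves the cofinite filter. Cluster points inherit
the eventual bound `dist ≤ d`, so every cluster point `q` satisfies `dist (t • q.1) (t • q.2) ≤ d`
for all `t`, and expansiveness puts `q` on the diagonal. By compactness the orbit of `(x, y)` then
tends to the neighbourhoods of the diagonal, which form the uniformity of `X`.
-/

open Filter Topology

theorem MapClusterPt.smul_of_orbit_cofinite {Γ Z : Type*} [Group Γ] [TopologicalSpace Z]
    [MulAction Γ Z] [ContinuousConstSMul Γ Z] {z w : Z}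
    (hw : MapClusterPt w cofinite fun s : Γ => s • z) (t : Γ) :
    MapClusterPt (t • w) cofinite fun s : Γ => s • z := by
  have hshift : MapClusterPt (t • w) cofinite ((fun s : Γ => s • z) ∘ (t * ·)) := by
    simpa only [Function.comp_def, mul_smul] using
      hw.continuousAt_comp (continuous_const_smul t).continuousAt
  exact hshift.of_comp (mul_right_injective t).tendsto_cofinite

theorem stmt11_general {Γ : Type*} [Group Γ]
    {X : Type*} [MetricSpace X] [CompactSpace X]
    [MulAction Γ X] (hcont : ∀ s : Γ, Continuous fun x : X => s • x)
    (d : ℝ)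
    -- `d` is an expansiveness constant
    (hexp : ∀ x y : X, (∀ s : Γ, dist (s • x) (s • y) ≤ d) → x = y)
    (x y : X)
    -- `dist (s • x) (s • y) ≤ d` for all but finitely many `s ∈ Γ`
    (h : ∀ᶠ s : Γ in cofinite, dist (s • x) (s • y) ≤ d) :
    -- `(x, y)` is an asymptotic pair
    Tendsto (fun s : Γ => dist (s • x) (s • y)) cofinite (𝓝 0) := by
  have : ContinuousConstSMul Γ X := ⟨hcont⟩
  have hclosed : IsClosed {q : X × X | dist q.1 q.2 ≤ d} :=
    isClosed_le continuous_dist continuous_const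
  have hdiag (q : X × X) (hq : MapClusterPt q cofinite fun s : Γ => s • (x, y)) :
      q ∈ Set.diagonal X :=
    hexp q.1 q.2 fun t => hclosed.mem_of_mapClusterPt (hq.smul_of_orbit_cofinite t) h
  have horbit : Tendsto (fun s : Γ => s • (x, y)) cofinite (𝓝ˢ (Set.diagonal X)) :=
    isCompact_univ.tendsto_nhdsSet_of_mapClusterPt (Eventually.of_forall fun _ => trivial)
      fun q _ => hdiag q
  rw [nhdsSet_diagonal_eq_uniformity] at horbit
  exact tendsto_uniformity_iff_dist_tendsto_zero.1 horbit

theorem stmt11 {Γ : Type*} [Group Γ] [Countable Γ]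
    {X : Type*} [MetricSpace X] [CompactSpace X]
    [MulAction Γ X] (hcont : ∀ s : Γ, Continuous fun x : X => s • x)
    (d : ℝ) (hd : 0 < d)
    -- `d` is an expansiveness constant
    (hexp : ∀ x y : X, (∀ s : Γ, dist (s • x) (s • y) ≤ d) → x = y)
    (x y : X)
    -- `dist (s • x) (s • y) ≤ d` for all but finitely many `s ∈ Γ`
    (h : ∀ᶠ s : Γ in cofinite, dist (s • x) (s • y) ≤ d) :
    -- `(x, y)` is an asymptotic pair
    Tendsto (fun s : Γ => dist (s • x) (s • y)) cofinite (𝓝 0) :=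
  stmt11_general hcont d hexp x y h
end

section
/- Let Γ be a group and let K and F be nonempty finite subsets of Γ. Then there exists a finite subset F₁ of F with |F₁|/|F| ≥ 1/(2|K| + 1) such that (F₁F₁⁻¹) ∖ {e_Γ} ⊆ Γ ∖ K, i.e. s′ ∉ Ks for all distinct s, s′ ∈ F₁. -/
/-!
STATEMENT 14: For nonempty finite subsets `K, F` of a group `Γ` there is `F₁ ⊆ F` with
`|F₁|/|F| ≥ 1/(2|K|+1)` such that `s' ∉ Ks` for all distinct `s, s' ∈ F₁` (equivalently
`(F₁F₁⁻¹) ∖ {e} ⊆ Γ ∖ K`).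
-/

private lemma stmt14_aux {Γ : Type*} [Group Γ] [DecidableEq Γ] (K : Finset Γ) :
    ∀ n (F : Finset Γ), F.card ≤ n →
      ∃ F₁ : Finset Γ, F₁ ⊆ F ∧ F.card ≤ (2 * K.card + 1) * F₁.card ∧
        ∀ s ∈ F₁, ∀ s' ∈ F₁, s ≠ s' → s' * s⁻¹ ∉ K := by
  intro n
  induction n with
  | zero =>
    intro F hF
    exact ⟨∅, by simp, by simpa using hF, by simp⟩
  | succ n ih =>
    intro F hF
    rcases F.eq_empty_or_nonempty with rfl | ⟨x, hx⟩
    · exact ⟨∅, by simp, by simp, by simp⟩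
    set N : Finset Γ := F.filter (fun s => s * x⁻¹ ∈ K ∨ x * s⁻¹ ∈ K) with hN
    set F' : Finset Γ := F \ insert x N with hF'
    have hxN : x ∉ F' := by simp [hF']
    have hF'card : F'.card ≤ n := by
      have : F'.card < F.card := by
        apply Finset.card_lt_card
        refine ⟨Finset.sdiff_subset, fun h => ?_⟩
        exact hxN (h (by simpa using hx))
      omega
    obtain ⟨F₁', hsub, hcard, hprop⟩ := ih F' hF'card
    have hxF₁' : x ∉ F₁' := fun h => hxN (hsub h)
    refine ⟨insert x F₁', ?_, ?_, ?_⟩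
    · intro s hs
      rcases Finset.mem_insert.mp hs with rfl | hs
      · exact hx
      · exact (Finset.sdiff_subset) (hsub hs)
    · have hNcard : N.card ≤ 2 * K.card := by
        have : N ⊆ K.image (· * x) ∪ K.image (fun k => k⁻¹ * x) := by
          intro s hs
          rcases Finset.mem_filter.mp hs with ⟨-, h1 | h2⟩
          · exact Finset.mem_union_left _ (Finset.mem_image.mpr ⟨s * x⁻¹, h1, by group⟩)
          · exact Finset.mem_union_right _ (Finset.mem_image.mpr ⟨x * s⁻¹, h2, by group⟩)
        calc N.card ≤ _ := Finset.card_le_card this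
          _ ≤ (K.image (· * x)).card + (K.image (fun k => k⁻¹ * x)).card :=
            Finset.card_union_le _ _
          _ ≤ K.card + K.card := by
            exact Nat.add_le_add (Finset.card_image_le) (Finset.card_image_le)
          _ = 2 * K.card := by ring
      have h1 : F.card ≤ F'.card + (N.card + 1) := by
        have h2 : (insert x N).card ≤ N.card + 1 := Finset.card_insert_le _ _
        have h3 : F.card ≤ (F \ insert x N).card + (insert x N).card :=
          Finset.card_le_card_sdiff_add_card
        calc F.card ≤ F'.card + (insert x N).card := h3
          _ ≤ F'.card + (N.card + 1) := by omega
      have hicard : (insert x F₁').card = F₁'.card + 1 := Finset.card_insert_of_notMem hxF₁'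
      rw [hicard]
      calc F.card ≤ F'.card + (N.card + 1) := h1
        _ ≤ (2 * K.card + 1) * F₁'.card + (2 * K.card + 1) := by omega
        _ = (2 * K.card + 1) * (F₁'.card + 1) := by ring
    · intro s hs s' hs' hne
      have key : ∀ t ∈ F₁', t * x⁻¹ ∉ K ∧ x * t⁻¹ ∉ K := by
        intro t ht
        have h := hsub ht
        have hmem : t ∈ F := (Finset.mem_sdiff.mp h).1
        have hn : t ∉ insert x N := (Finset.mem_sdiff.mp h).2
        have htN : t ∉ N := fun hh => hn (Finset.mem_insert_of_mem hh)
        constructor <;> intro hK' <;>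
          exact htN (Finset.mem_filter.mpr ⟨hmem, by tauto⟩)
      rcases Finset.mem_insert.mp hs with heq | hs
      · rcases Finset.mem_insert.mp hs' with heq' | hs'
        · exact absurd (heq.trans heq'.symm) hne
        · rw [heq]; exact (key s' hs').1
      · rcases Finset.mem_insert.mp hs' with heq' | hs'
        · rw [heq']; exact (key s hs).2
        · exact hprop s hs s' hs' hne

theorem stmt14 {Γ : Type*} [Group Γ] [DecidableEq Γ]
    (K F : Finset Γ) (hK : K.Nonempty) (hF : F.Nonempty) :
    ∃ F₁ : Finset Γ, F₁ ⊆ F ∧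
      (1 : ℝ) / (2 * K.card + 1) ≤ (F₁.card : ℝ) / F.card ∧
      ∀ s ∈ F₁, ∀ s' ∈ F₁, s ≠ s' → s' * s⁻¹ ∉ K := by
  obtain ⟨F₁, hsub, hcard, hprop⟩ := stmt14_aux K F.card F le_rfl
  refine ⟨F₁, hsub, ?_, hprop⟩
  have hFpos : (0 : ℝ) < F.card := by exact_mod_cast hF.card_pos
  have hKpos : (0 : ℝ) < 2 * K.card + 1 := by positivity
  rw [div_le_div_iff₀ hKpos hFpos]
  have : (F.card : ℝ) ≤ (2 * K.card + 1) * F₁.card := by exact_mod_cast hcard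
  nlinarith
end

section
/- Let 1 ≤ p < ∞. There exists a universal constant C_p > 0 such that for every λ > 1 there is δ > 0 with the following property: for every nonempty finite set Y, every positive integer n with |Y| ≤ δn, and every real M ≥ 1, the number of points x ∈ ℤ^Y with ‖x‖_p ≤ M·n^{1/p} is at most C_p λⁿ M^{|Y|}. -/
/-!
Put `m = ⌈M⌉ ≤ 2M` and write every coordinate as `x_y = m q_y + r_y` with `0 ≤ r_y < m`.
The remainders contribute a factor `m^|Y| ≤ (2M)^|Y|`, and since `|q_y| ≤ |x_y|/m + 1` the
quotient `q` lies in the ℓ¹-ball of radius `2^p n` (for integers `|k| ≤ |k|^p`). Rankin's trick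
counts lattice points there:
`#{‖q‖₁ ≤ R} ≤ e^{tR} (∑_{k ∈ ℤ} e^{-t|k|})^|Y| ≤ e^{tR} (1 + 2/t)^|Y|`.
Choosing `t` small makes `e^{tR} ≤ λ^{n/2}`, and then `|Y| ≤ δ n` with `δ` small makes
`(2 (1 + 2/t))^|Y| ≤ λ^{n/2}`; so `C = 1` works.
-/

universe u

open Finset Real

theorem hasSum_pow_natAbs {r : ℝ} (hr0 : 0 ≤ r) (hr1 : r < 1) :
    HasSum (fun m : ℤ => r ^ m.natAbs) ((1 + r) / (1 - r)) := by
  have hnat := hasSum_geometric_of_lt_one hr0 hr1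
  have hneg : HasSum (fun n : ℕ => r ^ (-((n : ℤ) + 1)).natAbs) (r * (1 - r)⁻¹) := by
    have h (n : ℕ) : (-((n : ℤ) + 1)).natAbs = n + 1 := by omega
    simp only [h, pow_succ']
    exact hnat.mul_left r
  convert HasSum.of_nat_of_neg_add_one (f := fun m : ℤ => r ^ m.natAbs) hnat hneg using 1
  ring

theorem sum_exp_neg_mul_abs_le (s : Finset ℤ) {t : ℝ} (ht : 0 < t) :
    ∑ m ∈ s, exp (-(t * |(m : ℝ)|)) ≤ 1 + 2 / t := by
  have hpow (m : ℤ) : exp (-(t * |(m : ℝ)|)) = exp (-t) ^ m.natAbs := by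
    rw [← exp_nat_mul, Nat.cast_natAbs, Int.cast_abs]
    ring_nf
  simp_rw [hpow]
  have hsum := hasSum_pow_natAbs (exp_pos (-t)).le (exp_lt_one_iff.2 (neg_lt_zero.2 ht))
  refine (sum_le_hasSum s (fun _ _ => by positivity) hsum).trans ?_
  have het : t + 1 ≤ exp t := add_one_le_exp t
  calc (1 + exp (-t)) / (1 - exp (-t)) = 1 + 2 / (exp t - 1) := by
        have : exp t - 1 ≠ 0 := by linarith
        rw [exp_neg]
        field_simp
        ring
    _ ≤ 1 + 2 / t := by gcongr; linarith

theorem card_filter_le_exp_mul_sum {α : Type*} (s : Finset α) (f : α → ℝ) (R : ℝ) {t : ℝ}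
    (ht : 0 ≤ t) : (#{a ∈ s | f a ≤ R} : ℝ) ≤ exp (t * R) * ∑ a ∈ s, exp (-(t * f a)) := by
  have hweight : ∀ a ∈ {a ∈ s | f a ≤ R}, (1 : ℝ) ≤ exp (t * (R - f a)) := fun a ha =>
    one_le_exp (mul_nonneg ht (sub_nonneg.2 (mem_filter.1 ha).2))
  calc (#{a ∈ s | f a ≤ R} : ℝ) ≤ ∑ a ∈ {a ∈ s | f a ≤ R}, exp (t * (R - f a)) := by
        simpa using card_nsmul_le_sum _ _ 1 hweight
    _ ≤ ∑ a ∈ s, exp (t * (R - f a)) :=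
        sum_le_sum_of_subset_of_nonneg (filter_subset _ _) fun _ _ _ => (exp_pos _).le
    _ = exp (t * R) * ∑ a ∈ s, exp (-(t * f a)) := by
        rw [mul_sum]
        refine sum_congr rfl fun a _ => ?_
        rw [← exp_add]
        ring_nf

theorem abs_ediv_le (a : ℤ) {m : ℕ} (hm : 0 < m) : |((a / m : ℤ) : ℝ)| ≤ |(a : ℝ)| / m + 1 := by
  have hdecomp := Int.mul_ediv_add_emod a m
  have hr0 := Int.emod_nonneg a (Int.natCast_pos.2 hm).ne'
  have hrm := Int.emod_lt_of_pos a (Int.natCast_pos.2 hm)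
  have hint : (m : ℤ) * |a / m| ≤ |a| + m := by
    rcases abs_cases (a / m) with ⟨hq, _⟩ | ⟨hq, _⟩ <;>
      rcases abs_cases a with ⟨ha, _⟩ | ⟨ha, _⟩ <;> rw [hq, ha] <;> linarith
  have hreal : (m : ℝ) * |((a / m : ℤ) : ℝ)| ≤ |(a : ℝ)| + m := by exact_mod_cast hint
  rw [div_add_one (by positivity), le_div_iff₀ (by positivity)]
  linarith

theorem add_one_rpow_le {u p : ℝ} (hu : 0 ≤ u) (hp : 1 ≤ p) :
    (u + 1) ^ p ≤ 2 ^ (p - 1) * (u ^ p + 1) := by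
  lift u to NNReal using hu
  have h := NNReal.rpow_add_le_mul_rpow_add_rpow u 1 hp
  rw [NNReal.one_rpow] at h
  exact_mod_cast h

theorem abs_intCast_le_rpow (a : ℤ) {p : ℝ} (hp : 1 ≤ p) : |(a : ℝ)| ≤ |(a : ℝ)| ^ p := by
  rcases eq_or_ne a 0 with rfl | ha
  · simpa using rpow_nonneg le_rfl p
  · refine self_le_rpow_of_one_le ?_ hp
    rw [← Int.cast_abs]
    exact_mod_cast Int.one_le_abs ha

theorem rpow_one_div_le_mul_rpow_one_div_iff {a M N p : ℝ} (ha : 0 ≤ a) (hM : 0 ≤ M)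
    (hN : 0 ≤ N) (hp : 0 < p) : a ^ (1 / p) ≤ M * N ^ (1 / p) ↔ a ≤ M ^ p * N := by
  rw [one_div, rpow_inv_le_iff_of_pos ha (by positivity) hp, mul_rpow hM (by positivity),
    rpow_inv_rpow hN hp.ne']

section IntL1Ball

variable {Y : Type*} [Fintype Y]

variable (Y) in
def intL1Ball (R : ℝ) : Set (Y → ℤ) := {z | ∑ y, |(z y : ℝ)| ≤ R}

theorem intL1Ball_subset_pi_Icc (R : ℝ) :
    intL1Ball Y R ⊆ Set.univ.pi fun _ => Set.Icc (-⌈R⌉) ⌈R⌉ := by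
  intro z hz y _
  have hy : |(z y : ℝ)| ≤ R :=
    (single_le_sum (fun y _ => abs_nonneg (z y : ℝ)) (mem_univ y)).trans hz
  rw [Set.mem_Icc, ← abs_le, ← Int.cast_le (R := ℝ), Int.cast_abs]
  exact hy.trans (Int.le_ceil R)

theorem intL1Ball_finite (R : ℝ) : (intL1Ball Y R).Finite :=
  (Set.Finite.pi fun _ => Set.finite_Icc _ _).subset (intL1Ball_subset_pi_Icc R)

theorem ncard_intL1Ball_le (R : ℝ) {t : ℝ} (ht : 0 < t) :
    ((intL1Ball Y R).ncard : ℝ) ≤ exp (t * R) * (1 + 2 / t) ^ Fintype.card Y := by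
  classical
  set B := Fintype.piFinset fun _ : Y => Icc (-⌈R⌉) ⌈R⌉
  have hball : intL1Ball Y R = ↑{z ∈ B | ∑ y, |(z y : ℝ)| ≤ R} := by
    ext z
    have hz := fun h : z ∈ intL1Ball Y R => intL1Ball_subset_pi_Icc R h
    simp only [Set.mem_univ_pi, Set.mem_Icc] at hz
    simp only [B, coe_filter, Fintype.mem_piFinset, mem_Icc]
    exact ⟨fun h => ⟨hz h, h⟩, And.right⟩
  have hfactor : ∑ z ∈ B, exp (-(t * ∑ y, |(z y : ℝ)|))
      = ∏ _y : Y, ∑ m ∈ Icc (-⌈R⌉) ⌈R⌉, exp (-(t * |(m : ℝ)|)) := by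
    rw [prod_univ_sum]
    refine sum_congr rfl fun z _ => ?_
    rw [mul_sum, ← sum_neg_distrib, exp_sum]
  rw [hball, Set.ncard_coe_finset]
  refine (card_filter_le_exp_mul_sum B _ R ht.le).trans ?_
  rw [hfactor, ← card_univ, ← prod_const]
  gcongr
  exact sum_exp_neg_mul_abs_le _ ht

theorem ediv_mem_intL1Ball {p : ℝ} (hp : 1 ≤ p) {x : Y → ℤ} {m : ℕ} (hm : 0 < m) {N : ℝ}
    (hx : ∑ y, |(x y : ℝ)| ^ p ≤ (m : ℝ) ^ p * N) (hY : (Fintype.card Y : ℝ) ≤ N) :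
    (fun y => x y / (m : ℤ)) ∈ intL1Ball Y (2 ^ p * N) := by
  have hm' : (0 : ℝ) < m := Nat.cast_pos.2 hm
  have hmp : (0 : ℝ) < (m : ℝ) ^ p := rpow_pos_of_pos hm' p
  have hscaled : ∑ y, (|(x y : ℝ)| / m) ^ p ≤ N := by
    simp_rw [div_rpow (abs_nonneg _) hm'.le, ← sum_div]
    rwa [div_le_iff₀' hmp]
  calc ∑ y, |((x y / m : ℤ) : ℝ)|
      ≤ ∑ y, (|(x y : ℝ)| / m + 1) ^ p := by
        gcongr with y
        exact (abs_intCast_le_rpow _ hp).trans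
          (rpow_le_rpow (abs_nonneg _) (abs_ediv_le _ hm) (by linarith))
    _ ≤ ∑ y, 2 ^ (p - 1) * ((|(x y : ℝ)| / m) ^ p + 1) :=
        sum_le_sum fun y _ => add_one_rpow_le (by positivity) hp
    _ = 2 ^ (p - 1) * (∑ y, (|(x y : ℝ)| / m) ^ p + Fintype.card Y) := by
        rw [← mul_sum, sum_add_distrib, sum_const, card_univ, nsmul_one]
    _ ≤ 2 ^ (p - 1) * (N + N) := by gcongr
    _ = 2 ^ p * N := by
        rw [← two_mul, ← mul_assoc, ← rpow_add_one two_ne_zero, sub_add_cancel]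

theorem ncard_le_ncard_mul_pow_of_ediv_mem {S T : Set (Y → ℤ)} (hT : T.Finite) {m : ℕ}
    (hm : 0 < m) (h : ∀ x ∈ S, (fun y => x y / (m : ℤ)) ∈ T) :
    S.ncard ≤ T.ncard * m ^ Fintype.card Y := by
  have := hT.to_subtype
  have : NeZero m := ⟨hm.ne'⟩
  let f : S → T × (Y → ZMod m) := fun x => (⟨_, h x x.2⟩, fun y => (x.1 y : ZMod m))
  have hf : Function.Injective f := by
    rintro ⟨x, _⟩ ⟨x', _⟩ hxx'
    simp only [f, Prod.mk.injEq, Subtype.mk.injEq, funext_iff] at hxx'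
    refine Subtype.ext (funext fun y => ?_)
    change x y = x' y
    rw [← Int.mul_ediv_add_emod (x y) m, ← Int.mul_ediv_add_emod (x' y) m, hxx'.1 y,
      (ZMod.intCast_eq_intCast_iff' _ _ m).1 (hxx'.2 y)]
  simpa [Nat.card_fun] using Nat.card_le_card_of_injective f hf

theorem natCard_intLpBall_le {p : ℝ} (hp : 1 ≤ p) {M N : ℝ} (hM : 1 ≤ M)
    (hY : (Fintype.card Y : ℝ) ≤ N) {t : ℝ} (ht : 0 < t) :
    (Nat.card {x : Y → ℤ // (∑ y, |(x y : ℝ)| ^ p) ^ (1 / p) ≤ M * N ^ (1 / p)} : ℝ)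
      ≤ exp (t * (2 ^ p * N)) * (2 * (1 + 2 / t)) ^ Fintype.card Y * M ^ Fintype.card Y := by
  set m := ⌈M⌉₊
  have hm : 0 < m := Nat.ceil_pos.2 (by linarith)
  have hMm : M ≤ m := Nat.le_ceil M
  have hm2M : (m : ℝ) ≤ 2 * M := Nat.ceil_le_two_mul (by linarith)
  have hN : 0 ≤ N := (Nat.cast_nonneg _).trans hY
  have hmem : ∀ x ∈ {x : Y → ℤ | (∑ y, |(x y : ℝ)| ^ p) ^ (1 / p) ≤ M * N ^ (1 / p)},
      (fun y => x y / (m : ℤ)) ∈ intL1Ball Y (2 ^ p * N) := by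
    intro x hx
    rw [Set.mem_ofPred_eq, rpow_one_div_le_mul_rpow_one_div_iff (by positivity) (by linarith) hN
      (by linarith)] at hx
    exact ediv_mem_intL1Ball hp hm (hx.trans (by gcongr)) hY
  have hcount := ncard_le_ncard_mul_pow_of_ediv_mem (intL1Ball_finite _) hm hmem
  calc (Nat.card {x : Y → ℤ // (∑ y, |(x y : ℝ)| ^ p) ^ (1 / p) ≤ M * N ^ (1 / p)} : ℝ)
      ≤ (intL1Ball Y (2 ^ p * N)).ncard * (m : ℝ) ^ Fintype.card Y := by exact_mod_cast hcount
    _ ≤ exp (t * (2 ^ p * N)) * (1 + 2 / t) ^ Fintype.card Y * (2 * M) ^ Fintype.card Y := by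
        gcongr
        exact ncard_intL1Ball_le _ ht
    _ = exp (t * (2 ^ p * N)) * (2 * (1 + 2 / t)) ^ Fintype.card Y * M ^ Fintype.card Y := by
        rw [mul_pow, mul_pow]
        ring

end IntL1Ball

theorem exists_pos_forall_pow_le_exp {A ε : ℝ} (hA : 1 ≤ A) (hε : 0 < ε) :
    ∃ δ, 0 < δ ∧ δ ≤ 1 ∧ ∀ (d : ℕ) (N : ℝ), (d : ℝ) ≤ δ * N → A ^ d ≤ exp (ε * N) := by
  have hlogA : 0 ≤ log A := log_nonneg hA
  refine ⟨min 1 (ε / (log A + 1)), by positivity, min_le_left _ _, fun d N hd => ?_⟩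
  set δ := min 1 (ε / (log A + 1))
  have hδ : 0 < δ := by positivity
  have hN : 0 ≤ N := nonneg_of_mul_nonneg_right ((Nat.cast_nonneg d).trans hd) hδ
  have hδlog : δ * log A ≤ ε := by
    calc δ * log A ≤ ε / (log A + 1) * (log A + 1) := by
          gcongr
          · exact min_le_right _ _
          · linarith
      _ = ε := div_mul_cancel₀ _ (by positivity)
  calc A ^ d = exp (d * log A) := by rw [exp_nat_mul, exp_log (by linarith)]
    _ ≤ exp (ε * N) := exp_le_exp.2 <| calc
        d * log A ≤ δ * N * log A := mul_le_mul_of_nonneg_right hd hlogA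
        _ = δ * log A * N := by ring
        _ ≤ ε * N := mul_le_mul_of_nonneg_right hδlog hN

theorem stmt15 (p : ℝ) (hp : 1 ≤ p) :
    ∃ C : ℝ, 0 < C ∧ ∀ lam : ℝ, 1 < lam → ∃ δ : ℝ, 0 < δ ∧
      ∀ (Y : Type u) [Fintype Y], Nonempty Y →
        ∀ n : ℕ, 0 < n → (Fintype.card Y : ℝ) ≤ δ * n →
          ∀ M : ℝ, 1 ≤ M →
            (Nat.card {x : Y → ℤ //
                (∑ y : Y, |(x y : ℝ)| ^ p) ^ (1 / p) ≤ M * (n : ℝ) ^ (1 / p)} : ℝ)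
              ≤ C * lam ^ n * M ^ Fintype.card Y := by
  refine ⟨1, one_pos, fun lam hlam => ?_⟩
  have hL : 0 < log lam := log_pos hlam
  set t := log lam / (2 * 2 ^ p)
  have ht : 0 < t := by positivity
  have hA : 1 ≤ 2 * (1 + 2 / t) := by linarith [div_pos two_pos ht]
  obtain ⟨δ, hδ, hδ1, hpow⟩ := exists_pos_forall_pow_le_exp hA (half_pos hL)
  refine ⟨δ, hδ, fun Y _ _ n _ hdn M hM => ?_⟩
  have hY : (Fintype.card Y : ℝ) ≤ n := hdn.trans (mul_le_of_le_one_left n.cast_nonneg hδ1)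
  have hexp : t * (2 ^ p * n) = log lam / 2 * n := by
    simp only [t]
    field_simp
  calc _ ≤ exp (t * (2 ^ p * n)) * (2 * (1 + 2 / t)) ^ Fintype.card Y * M ^ Fintype.card Y :=
        natCard_intLpBall_le hp hM hY ht
    _ ≤ exp (log lam / 2 * n) * exp (log lam / 2 * n) * M ^ Fintype.card Y := by
        rw [hexp]
        gcongr
        exact hpow _ _ hdn
    _ = 1 * lam ^ n * M ^ Fintype.card Y := by
        rw [← exp_add, ← add_mul, add_halves, mul_comm (log lam), exp_nat_mul,
          exp_log (by linarith), one_mul]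
end

section
/- Let a countable amenable discrete group Γ act on a compact metrizable group X by continuous automorphisms, and let x ∈ X be such that Σ_{s∈Γ} ρ(sx, e_X) < ∞ for some compatible translation-invariant metric ρ on X. Then x ∈ IE(X), i.e. (x, e_X) is an IE-pair. -/
/-!
STATEMENT 16: For an action of a countable amenable group `Γ` on a compact metrizable
group `X` by continuous automorphisms, any point `x` with `∑_{s ∈ Γ} ρ(sx, e_X) < ∞` for
some compatible translation-invariant metric `ρ` is an IE-point.
-/

open Topology
open scoped Pointwise

namespace Stmt16

variable {Γ : Type*} [Group Γ] [DecidableEq Γ]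

/-- The Følner condition, characterizing amenability of a countable discrete group. -/
def IsFolner (Γ : Type*) [Group Γ] [DecidableEq Γ] : Prop :=
  ∀ K : Finset Γ, ∀ ε : ℝ, 0 < ε →
    ∃ F : Finset Γ, F.Nonempty ∧ (((K * F) \ F).card : ℝ) ≤ ε * F.card

variable {X : Type*} [TopologicalSpace X] [MulAction Γ X]

/-- `F` is an independence set for the pair `(U₁, U₂)`. -/
def IsIndep (F : Finset Γ) (U₁ U₂ : Set X) : Prop :=
  ∀ σ : Γ → Bool, ∃ z : X, ∀ s ∈ F, s • z ∈ (if σ s then U₁ else U₂)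

/-- `(x₁, x₂)` is an IE-pair. -/
def IsIEPair (x₁ x₂ : X) : Prop :=
  ∀ U₁ ∈ 𝓝 x₁, ∀ U₂ ∈ 𝓝 x₂,
    ∃ K : Finset Γ, K.Nonempty ∧ ∃ c : ℝ, 0 < c ∧ ∃ ε : ℝ, 0 < ε ∧
      ∀ F : Finset Γ, (((K * F) \ F).card : ℝ) ≤ ε * F.card →
        ∃ F' : Finset Γ, F' ⊆ F ∧ c * F.card ≤ F'.card ∧ IsIndep F' U₁ U₂

end Stmt16

/-!
Choose a finite `E ⊆ Γ` such that the sum of `d(g • x, 1)` over any finite set of `g ∉ E`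
is below `δ`. Every finite `F ⊆ Γ` contains a subset `F'` with `|F| ≤ (2|E| + 1)|F'|` and
`t s⁻¹ ∉ E` for distinct `s, t ∈ F'` (a maximal such subset is `E`-dense in `F`). Given `σ`,
take `z = ∏_{σ s = 1} s⁻¹ • x`. Since `Γ` acts by automorphisms, `t • z` is the product of
the `(t s⁻¹) • x`, one factor of which is `x` when `σ t = 1`; translation invariance bounds its
distance to `x`, resp. to `1`, by the sum of `d((t s⁻¹) • x, 1)` over `s ≠ t`, which is `< δ`.
This works for every `F`, not only Følner sets.
-/

namespace Stmt16

section InvariantDist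

variable {X : Type*} [Group X] {d : X → X → ℝ}

theorem dist_list_prod_one_le (htri : ∀ x y z : X, d x z ≤ d x y + d y z)
    (hinvl : ∀ x y z : X, d (z * x) (z * y) = d x y) (hone : d 1 1 = 0) (l : List X) :
    d l.prod 1 ≤ (l.map (d · 1)).sum := by
  induction l with
  | nil => simp [hone]
  | cons a l ih =>
    calc d (a * l.prod) 1 ≤ d (a * l.prod) (a * 1) + d (a * 1) 1 := htri _ _ _
      _ = d l.prod 1 + d a 1 := by rw [hinvl, mul_one]
      _ ≤ ((a :: l).map (d · 1)).sum := by simp only [List.map_cons, List.sum_cons]; linarith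

theorem dist_prod_mul_mul_prod_le (htri : ∀ x y z : X, d x z ≤ d x y + d y z)
    (hinvl : ∀ x y z : X, d (z * x) (z * y) = d x y)
    (hinvr : ∀ x y z : X, d (x * z) (y * z) = d x y) (hone : d 1 1 = 0)
    (l₁ l₂ : List X) (w : X) :
    d (l₁.prod * w * l₂.prod) w ≤ (l₁.map (d · 1)).sum + (l₂.map (d · 1)).sum := by
  calc d (l₁.prod * w * l₂.prod) w
      ≤ d (l₁.prod * (w * l₂.prod)) (1 * (w * l₂.prod)) + d (w * l₂.prod) (w * 1) := by
        simpa only [mul_assoc, one_mul, mul_one] using htri _ (w * l₂.prod) w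
    _ = d l₁.prod 1 + d l₂.prod 1 := by rw [hinvr, hinvl]
    _ ≤ _ := add_le_add (dist_list_prod_one_le htri hinvl hone l₁)
        (dist_list_prod_one_le htri hinvl hone l₂)

end InvariantDist

theorem exists_subset_pairwise_mul_inv_notMem {Γ : Type*} [Group Γ]
    (E F : Finset Γ) :
    ∃ F' ⊆ F, (F' : Set Γ).Pairwise (fun s t => t * s⁻¹ ∉ E) ∧
      F.card ≤ (2 * E.card + 1) * F'.card := by
  classical
  obtain ⟨F', hF', hmax⟩ := Finset.exists_max_image
    (F.powerset.filter fun A : Finset Γ => (A : Set Γ).Pairwise fun s t => t * s⁻¹ ∉ E) Finset.card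
    ⟨∅, by simp⟩
  obtain ⟨hF'F, hsep⟩ := Finset.mem_filter.mp hF'
  rw [Finset.mem_powerset] at hF'F
  -- By maximality of `F'`, each `f ∈ F \ F'` clashes with some `s ∈ F'`.
  have hcover : F ⊆ F' ∪ E * F' ∪ E⁻¹ * F' := by
    intro f hf
    by_contra hfF'
    simp only [Finset.mem_union, not_or] at hfF'
    obtain ⟨⟨hfF', hfEF'⟩, hfEF''⟩ := hfF'
    have hins : ((insert f F' : Finset Γ) : Set Γ).Pairwise fun s t => t * s⁻¹ ∉ E := by
      rw [Finset.coe_insert, Set.pairwise_insert]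
      refine ⟨hsep, fun s hs _ => ⟨fun h => hfEF'' ?_, fun h => hfEF' ?_⟩⟩
      · exact Finset.mem_mul.mpr ⟨(s * f⁻¹)⁻¹, Finset.inv_mem_inv h, s, hs, by group⟩
      · exact Finset.mem_mul.mpr ⟨f * s⁻¹, h, s, hs, by group⟩
    have := hmax _ (Finset.mem_filter.mpr
      ⟨Finset.mem_powerset.mpr (Finset.insert_subset hf hF'F), hins⟩)
    rw [Finset.card_insert_of_notMem hfF'] at this
    omega
  refine ⟨F', hF'F, hsep, ?_⟩
  calc F.card ≤ (F' ∪ E * F' ∪ E⁻¹ * F').card := Finset.card_le_card hcover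
    _ ≤ F'.card + E.card * F'.card + E⁻¹.card * F'.card := by
      grw [Finset.card_union_le, Finset.card_union_le, Finset.card_mul_le, Finset.card_mul_le]
    _ = (2 * E.card + 1) * F'.card := by rw [Finset.card_inv]; ring

theorem sum_map_mul_inv_lt_of_pairwise {Γ : Type*} [Group Γ] {f : Γ → ℝ} {E : Finset Γ}
    {δ : ℝ} (hE : ∀ G : Finset Γ, Disjoint G E → ∑ g ∈ G, f g < δ) {F : Finset Γ}
    (hF : (F : Set Γ).Pairwise fun s t => t * s⁻¹ ∉ E) {t : Γ} (ht : t ∈ F) (l : List Γ)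
    (hl : l.Nodup) (hlF : ∀ s ∈ l, s ∈ F ∧ s ≠ t) :
    (l.map fun s => f (t * s⁻¹)).sum < δ := by
  classical
  have hinj : Set.InjOn (fun s => t * s⁻¹) l.toFinset := fun a _ b _ hab => by simpa using hab
  rw [← List.sum_toFinset _ hl, ← Finset.sum_image hinj]
  refine hE _ (Finset.disjoint_left.mpr fun g hg => ?_)
  obtain ⟨s, hs, rfl⟩ := Finset.mem_image.mp hg
  obtain ⟨hsF, hst⟩ := hlF s (List.mem_toFinset.mp hs)
  exact hF hsF ht hst

theorem isIndep_of_pairwise {Γ X : Type*} [Group Γ] [Group X] [MulDistribMulAction Γ X]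
    {d : X → X → ℝ} (htri : ∀ x y z : X, d x z ≤ d x y + d y z)
    (hinvl : ∀ x y z : X, d (z * x) (z * y) = d x y)
    (hinvr : ∀ x y z : X, d (x * z) (y * z) = d x y) (hone : d 1 1 = 0)
    {x : X} {E : Finset Γ} {δ : ℝ} (hE : ∀ G : Finset Γ, Disjoint G E → ∑ g ∈ G, d (g • x) 1 < δ)
    {F : Finset Γ} (hF : (F : Set Γ).Pairwise fun s t => t * s⁻¹ ∉ E) {U₁ U₂ : Set X}
    (hU₁ : ∀ y, d y x < δ → y ∈ U₁) (hU₂ : ∀ y, d y 1 < δ → y ∈ U₂) :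
    IsIndep F U₁ U₂ := by
  classical
  intro σ
  set l := F.toList.filter (σ ·)
  have hl : l.Nodup := F.nodup_toList.filter _
  have hlF : ∀ s ∈ l, s ∈ F ∧ σ s = true := fun s hs => by simpa [l] using hs
  refine ⟨(l.map (·⁻¹ • x)).prod, fun t ht => ?_⟩
  have hsmul : t • (l.map (·⁻¹ • x)).prod = (l.map fun s => (t * s⁻¹) • x).prod := by
    simp only [List.smul_prod', List.map_map, Function.comp_def, mul_smul]
  have htail (l' : List Γ) (hl' : l'.Nodup) (hl'F : ∀ s ∈ l', s ∈ F ∧ s ≠ t) :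
      (l'.map fun s => d ((t * s⁻¹) • x) 1).sum < δ :=
    sum_map_mul_inv_lt_of_pairwise (f := fun g => d (g • x) 1) hE hF ht l' hl' hl'F
  rw [hsmul]
  cases hσ : σ t
  · have htl : t ∉ l := fun h => by simpa [hσ] using (hlF t h).2
    simp only [Bool.false_eq_true, if_false]
    refine hU₂ _ ((dist_list_prod_one_le htri hinvl hone _).trans_lt ?_)
    rw [List.map_map]
    exact htail l hl fun s hs => ⟨(hlF s hs).1, by rintro rfl; exact htl hs⟩
  · obtain ⟨l₁, l₂, hl₁₂⟩ := List.append_of_mem (show t ∈ l by simpa [l] using ⟨ht, hσ⟩)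
    obtain ⟨htl₁₂, hl₁₂nodup⟩ : t ∉ l₁ ++ l₂ ∧ (l₁ ++ l₂).Nodup := by
      rw [← List.nodup_cons, ← List.nodup_middle, ← hl₁₂]
      exact hl
    simp only [if_true]
    refine hU₁ _ (lt_of_le_of_lt ?_ (htail _ hl₁₂nodup fun s hs => ⟨(hlF s ?_).1, ?_⟩))
    · simpa [hl₁₂, mul_assoc, Function.comp_def] using
        dist_prod_mul_mul_prod_le htri hinvl hinvr hone (l₁.map fun s => (t * s⁻¹) • x)
          (l₂.map fun s => (t * s⁻¹) • x) x
    · simp only [hl₁₂, List.mem_append, List.mem_cons] at hs ⊢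
      tauto
    · rintro rfl
      exact htl₁₂ hs

end Stmt16

open Stmt16 in
theorem stmt16_general {Γ : Type*} [Group Γ] [DecidableEq Γ]
    {X : Type*} [Group X] [TopologicalSpace X]
    [MulDistribMulAction Γ X]
    -- a compatible translation-invariant metric `d` on `X`
    (d : X → X → ℝ)
    (hsymm : ∀ x y : X, d x y = d y x)
    (hzero : ∀ x y : X, d x y = 0 ↔ x = y)
    (htri : ∀ x y z : X, d x z ≤ d x y + d y z)
    (hinvl : ∀ x y z : X, d (z * x) (z * y) = d x y)
    (hinvr : ∀ x y z : X, d (x * z) (y * z) = d x y)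
    (hcompat : ∀ (x : X) (U : Set X), U ∈ 𝓝 x ↔ ∃ ε : ℝ, 0 < ε ∧ ∀ y : X, d x y < ε → y ∈ U)
    (x : X) (hsum : Summable fun s : Γ => d (s • x) 1) :
    -- `x ∈ IE(X)`, i.e. `(x, e_X)` is an IE-pair
    IsIEPair (Γ := Γ) x (1 : X) := by
  intro U₁ hU₁ U₂ hU₂
  obtain ⟨δ₁, hδ₁, hU₁⟩ := (hcompat x U₁).mp hU₁
  obtain ⟨δ₂, hδ₂, hU₂⟩ := (hcompat 1 U₂).mp hU₂
  obtain ⟨E, hE⟩ := summable_iff_vanishing_norm.mp hsum (min δ₁ δ₂) (lt_min hδ₁ hδ₂)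
  refine ⟨{1}, Finset.singleton_nonempty 1, (2 * E.card + 1 : ℝ)⁻¹, by positivity, 1, one_pos,
    fun F _ => ?_⟩
  obtain ⟨F', hF'F, hF', hcard⟩ := exists_subset_pairwise_mul_inv_notMem E F
  refine ⟨F', hF'F, ?_, isIndep_of_pairwise htri hinvl hinvr ((hzero 1 1).mpr rfl)
    (fun G hG => (le_abs_self _).trans_lt (hE G hG)) hF' (fun y hy => hU₁ y ?_)
    (fun y hy => hU₂ y ?_)⟩
  · rw [inv_mul_le_iff₀ (by positivity)]
    exact_mod_cast hcard
  · exact hsymm x y ▸ hy.trans_le (min_le_left _ _)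
  · exact hsymm 1 y ▸ hy.trans_le (min_le_right _ _)

open Stmt16 in
theorem stmt16 {Γ : Type*} [Group Γ] [Countable Γ] [DecidableEq Γ]
    {X : Type*} [Group X] [TopologicalSpace X] [IsTopologicalGroup X] [CompactSpace X]
    [TopologicalSpace.MetrizableSpace X]
    [MulDistribMulAction Γ X]
    (hamen : IsFolner Γ)
    (hcont : ∀ s : Γ, Continuous fun x : X => s • x)
    -- a compatible translation-invariant metric `d` on `X`
    (d : X → X → ℝ)
    (hsymm : ∀ x y : X, d x y = d y x)
    (hzero : ∀ x y : X, d x y = 0 ↔ x = y)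
    (htri : ∀ x y z : X, d x z ≤ d x y + d y z)
    (hinvl : ∀ x y z : X, d (z * x) (z * y) = d x y)
    (hinvr : ∀ x y z : X, d (x * z) (y * z) = d x y)
    (hcompat : ∀ (x : X) (U : Set X), U ∈ 𝓝 x ↔ ∃ ε : ℝ, 0 < ε ∧ ∀ y : X, d x y < ε → y ∈ U)
    (x : X) (hsum : Summable fun s : Γ => d (s • x) 1) :
    -- `x ∈ IE(X)`, i.e. `(x, e_X)` is an IE-pair
    IsIEPair (Γ := Γ) x (1 : X) :=
  stmt16_general d hsymm hzero htri hinvl hinvr hcompat x hsum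
end

section
/- Let a countable amenable discrete group Γ act on a compact metrizable group X by continuous automorphisms. Then: (1) IE(X) is a closed Γ-invariant normal subgroup of X; (2) for every k ∈ ℕ, the set IE_k(X) of IE-tuples of length k is a closed Γ-invariant subgroup of the group X^k (with the product Γ-action), and IE_k(X) = {(x₁y, …, x_ky) : x₁, …, x_k ∈ IE(X), y ∈ X} = {(yx₁, …, yx_k) : x₁, …, x_k ∈ IE(X), y ∈ X}. -/
open Topology
open scoped Pointwise

namespace Stmt17

variable {Γ : Type*} [Group Γ] [DecidableEq Γ]

/-- The Følner condition, characterizing amenability of a countable discrete group. -/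
def IsFolner (Γ : Type*) [Group Γ] [DecidableEq Γ] : Prop :=
  ∀ K : Finset Γ, ∀ ε : ℝ, 0 < ε →
    ∃ F : Finset Γ, F.Nonempty ∧ (((K * F) \ F).card : ℝ) ≤ ε * F.card

variable {X : Type*} [TopologicalSpace X] [MulAction Γ X]

/-- `F` is an independence set for the tuple `(U₁, …, U_k)`. -/
def IsIndep {k : ℕ} (F : Finset Γ) (U : Fin k → Set X) : Prop :=
  ∀ σ : Γ → Fin k, ∃ z : X, ∀ s ∈ F, s • z ∈ U (σ s)

/-- `x = (x₁, …, x_k)` is an IE-tuple. -/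
def IsIETuple {k : ℕ} (x : Fin k → X) : Prop :=
  ∀ U : Fin k → Set X, (∀ i, U i ∈ 𝓝 (x i)) →
    ∃ K : Finset Γ, K.Nonempty ∧ ∃ c : ℝ, 0 < c ∧ ∃ ε : ℝ, 0 < ε ∧
      ∀ F : Finset Γ, (((K * F) \ F).card : ℝ) ≤ ε * F.card →
        ∃ F' : Finset Γ, F' ⊆ F ∧ c * F.card ≤ F'.card ∧ IsIndep F' U

/-- The set `IE_k(X)` of IE-tuples of length `k`. -/
def IEk (Γ : Type*) [Group Γ] [DecidableEq Γ] {X : Type*} [TopologicalSpace X]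
    [MulAction Γ X] [One X] (k : ℕ) : Set (Fin k → X) :=
  {x | IsIETuple (Γ := Γ) x}

/-- The IE group `IE(X) = {x : (x, e_X) ∈ IE₂(X)}`. -/
def IE (Γ : Type*) [Group Γ] [DecidableEq Γ] (X : Type*) [TopologicalSpace X]
    [MulAction Γ X] [One X] : Set X :=
  {x | IsIETuple (Γ := Γ) ![x, (1 : X)]}

end Stmt17

/-! For amenable `Γ` the Følner restriction in the definition of IE-tuples can be dropped:
a dense independence set inside a Følner set `F E`, averaged over the right translates `F s`
(`s ∈ E`), gives a dense independence set inside one translate of `F`, hence inside `F` itself.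
In this uniform form, IE-tuples are closed under coordinatewise multiplication (pass to an
independence set inside an independence set and multiply the witnesses, the action being by
automorphisms) and inversion, and every constant tuple `(y, …, y)` is an IE-tuple: by
invariance of Haar measure some point `z` has `s • z` in a given neighbourhood `V` of `y` for a
proportion `μ V` of the `s ∈ F`. So `IE_k(X)` is a subgroup containing the diagonal, and the
rest is bookkeeping with `x = ∏ᵢ Pi.mulSingle i (x i)` and
`z = (z i * (z j)⁻¹)ᵢ * (z j, …, z j)`. -/

open MeasureTheory Finset
open scoped ENNReal

namespace Stmt17

section Independence

variable {Γ : Type*} [Group Γ] {X : Type*} [MulAction Γ X] {k : ℕ}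

theorem IsIndep.mono {F F' : Finset Γ} {U : Fin k → Set X} (h : IsIndep F U) (hF' : F' ⊆ F) :
    IsIndep F' U :=
  fun σ => (h σ).imp fun _ hz s hs => hz s (hF' hs)

theorem IsIndep.of_mul_right_mem {D F : Finset Γ} {U : Fin k → Set X} (hD : IsIndep D U) (g : Γ)
    (hF : ∀ s ∈ F, s * g ∈ D) : IsIndep F U := by
  intro σ
  obtain ⟨z, hz⟩ := hD fun t => σ (t * g⁻¹)
  exact ⟨g • z, fun s hs => by simpa [smul_smul] using hz _ (hF s hs)⟩

theorem IsIndep.image_mul_left [DecidableEq Γ] {F : Finset Γ} {U : Fin k → Set X} (g : Γ)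
    (h : IsIndep F fun i => (g • ·) ⁻¹' U i) : IsIndep (F.image (g * ·)) U := by
  intro σ
  obtain ⟨z, hz⟩ := h fun t => σ (g * t)
  refine ⟨z, fun s hs => ?_⟩
  obtain ⟨t, ht, rfl⟩ := mem_image.1 hs
  simpa [mul_smul] using hz t ht

variable (Γ) in
def HasPosIndepDensity (U : Fin k → Set X) : Prop :=
  ∃ c : ℝ, 0 < c ∧ ∀ F : Finset Γ, ∃ F' ⊆ F, c * #F ≤ #F' ∧ IsIndep F' U

variable (Γ) in
def IsUniformIETuple [TopologicalSpace X] (x : Fin k → X) : Prop :=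
  ∀ U : Fin k → Set X, (∀ i, U i ∈ 𝓝 (x i)) → HasPosIndepDensity Γ U

end Independence

section Counting

theorem card_add_card_le_card_filter_add_card {α β : Type*} [DecidableEq β] {E : Finset α}
    {D T : Finset β} (φ : α → β) (hφ : Set.InjOn φ E) (hmaps : Set.MapsTo φ E T)
    (hD : D ⊆ T) :
    #E + #D ≤ #{a ∈ E | φ a ∈ D} + #T := by
  have hout : #{a ∈ E | φ a ∉ D} ≤ #(T \ D) :=
    card_le_card_of_injOn φ (fun a ha => by
      rw [coe_filter] at ha
      exact mem_sdiff.2 ⟨hmaps ha.1, ha.2⟩) (hφ.mono (filter_subset _ _))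
  have := card_sdiff_add_card_eq_card hD
  have := card_filter_add_card_filter_not (s := E) (fun a => φ a ∈ D)
  omega

theorem card_sdiff_le_card_sdiff_of_card_le {α : Type*} [DecidableEq α] {S T E : Finset α}
    (hTS : T ⊆ S) (h : #E ≤ #T) : #(S \ T) ≤ #(S \ E) := by
  rw [card_sdiff_of_subset hTS]
  exact (Nat.sub_le_sub_left h _).trans (le_card_sdiff E S)

variable {Γ : Type*} [Group Γ] [DecidableEq Γ]

theorem card_mul_le_card_add_card_mul_sdiff {A F E : Finset Γ} (hFA : F ⊆ A) :
    #(F * E) ≤ #E + #((A * E) \ E) := by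
  have := card_le_card (mul_subset_mul_right (t := E) hFA)
  have := card_le_card_sdiff_add_card (s := A * E) (t := E)
  omega

theorem card_mul_mul_sdiff_le {K F E : Finset Γ} (hF : F.Nonempty) :
    #((K * (F * E)) \ (F * E)) ≤ #(((K * F ∪ F) * E) \ E) := by
  have hsub : (K * (F * E)) \ (F * E) ⊆ ((K * F ∪ F) * E) \ (F * E) := by
    rw [← mul_assoc]
    exact sdiff_subset_sdiff (mul_subset_mul_right subset_union_left) subset_rfl
  exact (card_le_card hsub).trans <| card_sdiff_le_card_sdiff_of_card_le
    (mul_subset_mul_right subset_union_right) (card_le_card_mul_left hF)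

/-- Double counting of the pairs `(f, s) ∈ F × E` with `f * s ∈ D`. -/
theorem card_mul_add_card_le_sum_card_filter {F E D : Finset Γ} (hD : D ⊆ F * E) :
    #F * (#E + #D) ≤ ∑ s ∈ E, #{f ∈ F | f * s ∈ D} + #F * #(F * E) := by
  have hswap : ∑ s ∈ E, #{f ∈ F | f * s ∈ D} = ∑ f ∈ F, #{s ∈ E | f * s ∈ D} :=
    (sum_card_bipartiteAbove_eq_sum_card_bipartiteBelow (fun f s => f * s ∈ D)).symm
  have hrow : ∀ f ∈ F, #E + #D ≤ #{s ∈ E | f * s ∈ D} + #(F * E) := fun f hf =>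
    card_add_card_le_card_filter_add_card (f * ·) (mul_right_injective f).injOn
      (fun s hs => mul_mem_mul hf hs) hD
  calc #F * (#E + #D) = ∑ _f ∈ F, (#E + #D) := by rw [sum_const, smul_eq_mul]
    _ ≤ ∑ f ∈ F, (#{s ∈ E | f * s ∈ D} + #(F * E)) := sum_le_sum hrow
    _ = _ := by rw [sum_add_distrib, sum_const, smul_eq_mul, hswap]

end Counting

section Amenable

variable {Γ : Type*} [Group Γ] [DecidableEq Γ] {X : Type*} [MulAction Γ X] {k : ℕ}

theorem hasPosIndepDensity_of_isFolner (hamen : IsFolner Γ) {U : Fin k → Set X} {K : Finset Γ}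
    {c ε : ℝ} (hc : 0 < c) (hε : 0 < ε)
    (hK : ∀ F : Finset Γ, (#((K * F) \ F) : ℝ) ≤ ε * #F →
      ∃ F' ⊆ F, c * #F ≤ #F' ∧ IsIndep F' U) :
    HasPosIndepDensity Γ U := by
  refine ⟨c / 2, half_pos hc, fun F => ?_⟩
  rcases F.eq_empty_or_nonempty with rfl | hF
  · obtain ⟨F', hF', -, hind⟩ := hK ∅ (by simp)
    exact ⟨F', hF', by simp, hind⟩
  set δ := min ε (c / 2)
  obtain ⟨E, hE, hEfol⟩ := hamen (K * F ∪ F) δ (lt_min hε (half_pos hc))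
  have hEFE : (#E : ℝ) ≤ #(F * E) := by exact_mod_cast card_le_card_mul_left hF
  have hFE : (#(F * E) : ℝ) ≤ #E + δ * #E := by
    have : (#(F * E) : ℝ) ≤ #E + #(((K * F ∪ F) * E) \ E) := by
      exact_mod_cast card_mul_le_card_add_card_mul_sdiff subset_union_right
    linarith
  have hFol : (#((K * (F * E)) \ (F * E)) : ℝ) ≤ ε * #(F * E) :=
    calc (#((K * (F * E)) \ (F * E)) : ℝ) ≤ #(((K * F ∪ F) * E) \ E) := by
          exact_mod_cast card_mul_mul_sdiff_le hF
      _ ≤ δ * #E := hEfol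
      _ ≤ ε * #(F * E) := mul_le_mul (min_le_left _ _) hEFE (by positivity) hε.le
  obtain ⟨D, hD, hDcard, hDind⟩ := hK (F * E) hFol
  have hsum :
      (#F : ℝ) * (#E + #D) ≤ ∑ s ∈ E, (#{f ∈ F | f * s ∈ D} : ℝ) + #F * #(F * E) := by
    exact_mod_cast card_mul_add_card_le_sum_card_filter hD
  have hrow : c / 2 * #E ≤ (#E : ℝ) + #D - #(F * E) := by
    have : δ * #E ≤ c / 2 * #E := mul_le_mul_of_nonneg_right (min_le_right _ _) (by positivity)
    nlinarith
  obtain ⟨s, -, hs⟩ : ∃ s ∈ E, c / 2 * #F ≤ (#{f ∈ F | f * s ∈ D} : ℝ) := by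
    refine exists_le_of_sum_le hE ?_
    rw [sum_const, nsmul_eq_mul]
    nlinarith [mul_le_mul_of_nonneg_left hrow (Nat.cast_nonneg (α := ℝ) #F)]
  exact ⟨_, filter_subset _ _, hs, hDind.of_mul_right_mem s fun f hf => (mem_filter.1 hf).2⟩

theorem isIETuple_iff_isUniformIETuple [TopologicalSpace X] (hamen : IsFolner Γ)
    {x : Fin k → X} : IsIETuple (Γ := Γ) x ↔ IsUniformIETuple Γ x := by
  refine ⟨fun h U hU => ?_, fun h U hU => ?_⟩
  · obtain ⟨K, -, c, hc, ε, hε, hK⟩ := h U hU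
    exact hasPosIndepDensity_of_isFolner hamen hc hε hK
  · obtain ⟨c, hc, hdense⟩ := h U hU
    exact ⟨{1}, singleton_nonempty 1, c, hc, 1, one_pos, fun F _ => hdense F⟩

end Amenable

section Operations

variable {Γ : Type*} [Group Γ] {X : Type*} [TopologicalSpace X] [MulAction Γ X] {k : ℕ}

theorem IsUniformIETuple.comp {m : ℕ} {x : Fin k → X} (hx : IsUniformIETuple Γ x)
    (θ : Fin m → Fin k) : IsUniformIETuple Γ (x ∘ θ) := by
  intro U hU
  obtain ⟨c, hc, hdense⟩ := hx (fun l => ⋂ j : {j // θ j = l}, U j) fun l =>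
    Filter.iInter_mem.2 fun ⟨j, hj⟩ => hj ▸ hU j
  refine ⟨c, hc, fun F => ?_⟩
  obtain ⟨F', hF', hcard, hind⟩ := hdense F
  refine ⟨F', hF', hcard, fun σ => ?_⟩
  obtain ⟨z, hz⟩ := hind (θ ∘ σ)
  exact ⟨z, fun s hs => Set.mem_iInter.1 (hz s hs) ⟨σ s, rfl⟩⟩

theorem IsUniformIETuple.smul [DecidableEq Γ] [ContinuousConstSMul Γ X] {x : Fin k → X}
    (hx : IsUniformIETuple Γ x) (g : Γ) : IsUniformIETuple Γ fun i => g • x i := by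
  intro U hU
  obtain ⟨c, hc, hdense⟩ := hx (fun i => (g • ·) ⁻¹' U i) fun i =>
    (continuous_const_smul g).continuousAt.preimage_mem_nhds (hU i)
  refine ⟨c, hc, fun F => ?_⟩
  obtain ⟨F', hF', hcard, hind⟩ := hdense (F.image (g⁻¹ * ·))
  refine ⟨F'.image (g * ·), fun t ht => ?_, ?_, hind.image_mul_left g⟩
  · obtain ⟨u, hu, rfl⟩ := mem_image.1 ht
    obtain ⟨f, hf, rfl⟩ := mem_image.1 (hF' hu)
    simpa using hf
  · rwa [card_image_of_injective _ (mul_right_injective g),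
      ← card_image_of_injective F (mul_right_injective g⁻¹)]

end Operations

section TopologicalGroup

variable {Γ : Type*} [Group Γ] {X : Type*} [Group X] [TopologicalSpace X] [IsTopologicalGroup X]
  [MulDistribMulAction Γ X] {k : ℕ}

theorem IsUniformIETuple.mul {x y : Fin k → X} (hx : IsUniformIETuple Γ x)
    (hy : IsUniformIETuple Γ y) : IsUniformIETuple Γ (x * y) := by
  intro W hW
  have hUV (i) : ∃ U ∈ 𝓝 (x i), ∃ V ∈ 𝓝 (y i), ∀ u ∈ U, ∀ v ∈ V, u * v ∈ W i := by
    obtain ⟨U, hU, V, hV, hUV⟩ := mem_nhds_prod_iff.1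
      (continuous_mul.continuousAt.preimage_mem_nhds (hW i) : (· * ·).uncurry ⁻¹' W i ∈ _)
    exact ⟨U, hU, V, hV, fun u hu v hv => hUV (Set.mk_mem_prod hu hv)⟩
  choose U hU V hV hUVW using hUV
  obtain ⟨c, hc, hxdense⟩ := hx U hU
  obtain ⟨d, hd, hydense⟩ := hy V hV
  refine ⟨d * c, mul_pos hd hc, fun F => ?_⟩
  -- an independence set for `V` inside one for `U`, so that both witnesses exist on it
  obtain ⟨F₁, hF₁, hcard₁, hind₁⟩ := hxdense F
  obtain ⟨F₂, hF₂, hcard₂, hind₂⟩ := hydense F₁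
  refine ⟨F₂, hF₂.trans hF₁, ?_, fun σ => ?_⟩
  · rw [mul_assoc]
    exact (mul_le_mul_of_nonneg_left hcard₁ hd.le).trans hcard₂
  · obtain ⟨u, hu⟩ := hind₁.mono hF₂ σ
    obtain ⟨v, hv⟩ := hind₂ σ
    exact ⟨u * v, fun s hs => smul_mul' s u v ▸ hUVW _ _ (hu s hs) _ (hv s hs)⟩

theorem IsUniformIETuple.inv {x : Fin k → X} (hx : IsUniformIETuple Γ x) :
    IsUniformIETuple Γ x⁻¹ := by
  intro U hU
  obtain ⟨c, hc, hdense⟩ := hx (fun i => (U i)⁻¹) fun i =>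
    continuous_inv.continuousAt.preimage_mem_nhds (by simpa using hU i)
  refine ⟨c, hc, fun F => ?_⟩
  obtain ⟨F', hF', hcard, hind⟩ := hdense F
  refine ⟨F', hF', hcard, fun σ => ?_⟩
  obtain ⟨z, hz⟩ := hind σ
  exact ⟨z⁻¹, fun s hs => by simpa [smul_inv'] using hz s hs⟩

open scoped Classical in
theorem exists_le_card_filter_smul_mem [CompactSpace X] [ContinuousConstSMul Γ X] {V : Set X}
    (hV : IsOpen V) (hne : V.Nonempty) :
    ∃ c : ℝ, 0 < c ∧ ∀ F : Finset Γ, ∃ z : X, c * #F ≤ #{s ∈ F | s • z ∈ V} := by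
  borelize X
  let μ := Measure.haarMeasure (⊤ : TopologicalSpace.PositiveCompacts X)
  have : IsProbabilityMeasure μ := ⟨by
    rw [← TopologicalSpace.PositiveCompacts.coe_top]
    exact Measure.haarMeasure_self⟩
  have hinv (s : Γ) : μ ((s • ·) ⁻¹' V) = μ V := by
    let φ : X ≃ₜ* X :=
      { MulDistribMulAction.toMulEquiv X s with
        continuous_toFun := continuous_const_smul s
        continuous_invFun := continuous_const_smul s⁻¹ }
    have := mulEquivHaarChar_smul_preimage μ (X := V) φ
    rwa [mulEquivHaarChar_eq_one_of_compactSpace, one_smul] at this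
  have hint (F : Finset Γ) :
      ∫⁻ z, (#{s ∈ F | s • z ∈ V} : ℝ≥0∞) ∂μ = #F * μ V := by
    have hmeas (s : Γ) : MeasurableSet ((s • ·) ⁻¹' V) :=
      hV.measurableSet.preimage (continuous_const_smul s).measurable
    calc ∫⁻ z, (#{s ∈ F | s • z ∈ V} : ℝ≥0∞) ∂μ
        = ∫⁻ z, ∑ s ∈ F, ((s • ·) ⁻¹' V).indicator 1 z ∂μ := by
          congr with z
          rw [card_filter, Nat.cast_sum]
          simp only [Set.indicator_apply, Set.mem_preimage, Pi.one_apply, Nat.cast_ite,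
            Nat.cast_one, Nat.cast_zero]
      _ = ∑ s ∈ F, μ ((s • ·) ⁻¹' V) := by
          rw [lintegral_finsetSum _ fun s _ => measurable_one.indicator (hmeas s)]
          exact sum_congr rfl fun s _ => lintegral_indicator_one (hmeas s)
      _ = #F * μ V := by simp [hinv]
  refine ⟨(μ V).toReal, ENNReal.toReal_pos (hV.measure_pos μ hne).ne' (measure_ne_top μ V),
    fun F => ?_⟩
  obtain ⟨z, hz⟩ := exists_lintegral_le (μ := μ) (f := fun z => #{s ∈ F | s • z ∈ V})
    (by rw [hint]; exact ENNReal.mul_ne_top (by simp) (measure_ne_top μ V))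
  refine ⟨z, ?_⟩
  rw [hint] at hz
  simpa [ENNReal.toReal_mul, mul_comm] using ENNReal.toReal_mono (by simp) hz

end TopologicalGroup

section CompactGroup

variable {Γ : Type*} [Group Γ] {X : Type*} [Group X] [TopologicalSpace X] [IsTopologicalGroup X]
  [CompactSpace X] [MulDistribMulAction Γ X] [ContinuousConstSMul Γ X] {k : ℕ}

theorem isUniformIETuple_const (k : ℕ) (y : X) : IsUniformIETuple Γ fun _ : Fin k => y := by
  intro U hU
  obtain ⟨c, hc, hvisits⟩ := exists_le_card_filter_smul_mem (Γ := Γ)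
    (isOpen_iInter_of_finite fun i => isOpen_interior (s := U i))
    ⟨y, Set.mem_iInter.2 fun i => mem_interior_iff_mem_nhds.2 (hU i)⟩
  refine ⟨c, hc, fun F => ?_⟩
  obtain ⟨z, hz⟩ := hvisits F
  classical
  exact ⟨_, filter_subset _ _, hz, fun σ => ⟨z, fun s hs =>
    interior_subset (Set.mem_iInter.1 (mem_filter.1 hs).2 (σ s))⟩⟩

variable (Γ X) in
def uniformIETuples (k : ℕ) : Subgroup (Fin k → X) where
  carrier := {x | IsUniformIETuple Γ x}
  mul_mem' := IsUniformIETuple.mul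
  one_mem' := isUniformIETuple_const k 1
  inv_mem' := IsUniformIETuple.inv

variable (Γ X) in
def ieSubgroup : Subgroup X :=
  (uniformIETuples Γ X 2).comap (MonoidHom.mulSingle (fun _ => X) 0)

theorem mem_ieSubgroup_iff {w : X} :
    w ∈ ieSubgroup Γ X ↔ Pi.mulSingle (0 : Fin 2) w ∈ uniformIETuples Γ X 2 :=
  Iff.rfl

instance : (ieSubgroup Γ X).Normal where
  conj_mem x hx g := by
    have : Pi.mulSingle (0 : Fin 2) (g * x * g⁻¹) =
        (fun _ => g) * (Pi.mulSingle 0 x : Fin 2 → X) * fun _ => g⁻¹ := by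
      funext i
      fin_cases i <;> simp
    rw [mem_ieSubgroup_iff, this]
    exact mul_mem (mul_mem (isUniformIETuple_const 2 g) hx) (isUniformIETuple_const 2 g⁻¹)

theorem smul_mem_ieSubgroup [DecidableEq Γ] (g : Γ) {x : X} (hx : x ∈ ieSubgroup Γ X) :
    g • x ∈ ieSubgroup Γ X := by
  have : Pi.mulSingle (0 : Fin 2) (g • x) =
      fun i => g • (Pi.mulSingle 0 x : Fin 2 → X) i := by
    funext i
    fin_cases i <;> simp
  rw [mem_ieSubgroup_iff, this]
  exact IsUniformIETuple.smul hx g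

theorem mulSingle_mem_uniformIETuples {w : X} (hw : w ∈ ieSubgroup Γ X) (j : Fin k) :
    Pi.mulSingle j w ∈ uniformIETuples Γ X k := by
  have : Pi.mulSingle j w = Pi.mulSingle (0 : Fin 2) w ∘ fun i => if i = j then 0 else 1 := by
    funext i
    by_cases h : i = j <;> simp [h]
  rw [this]
  exact IsUniformIETuple.comp hw _

theorem pi_mem_uniformIETuples {x : Fin k → X} (hx : ∀ i, x i ∈ ieSubgroup Γ X) :
    x ∈ uniformIETuples Γ X k :=
  Subgroup.pi_mem_of_mulSingle_mem x fun i => mulSingle_mem_uniformIETuples (hx i) i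

theorem mul_inv_mem_ieSubgroup {z : Fin k → X} (hz : z ∈ uniformIETuples Γ X k) (i j : Fin k) :
    z i * (z j)⁻¹ ∈ ieSubgroup Γ X := by
  have : Pi.mulSingle (0 : Fin 2) (z i * (z j)⁻¹) = z ∘ ![i, j] * fun _ => (z j)⁻¹ := by
    funext l
    fin_cases l <;> simp
  rw [mem_ieSubgroup_iff, this]
  exact mul_mem (IsUniformIETuple.comp hz _) (isUniformIETuple_const 2 _)

theorem inv_mul_mem_ieSubgroup {z : Fin k → X} (hz : z ∈ uniformIETuples Γ X k) (i j : Fin k) :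
    (z j)⁻¹ * z i ∈ ieSubgroup Γ X := by
  have : Pi.mulSingle (0 : Fin 2) ((z j)⁻¹ * z i) = (fun _ => (z j)⁻¹) * z ∘ ![i, j] := by
    funext l
    fin_cases l <;> simp
  rw [mem_ieSubgroup_iff, this]
  exact mul_mem (isUniformIETuple_const 2 _) (IsUniformIETuple.comp hz _)

theorem coe_uniformIETuples_eq_mul_const : (uniformIETuples Γ X k : Set (Fin k → X)) =
    {z | ∃ (x : Fin k → X) (y : X),
      (∀ i, x i ∈ ieSubgroup Γ X) ∧ z = fun i => x i * y} := by
  ext z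
  refine ⟨fun hz => ?_, ?_⟩
  · rcases isEmpty_or_nonempty (Fin k) with hk | ⟨⟨j⟩⟩
    · exact ⟨z, 1, isEmptyElim, Subsingleton.elim _ _⟩
    · exact ⟨fun i => z i * (z j)⁻¹, z j, fun i => mul_inv_mem_ieSubgroup hz i j, by simp⟩
  · rintro ⟨x, y, hx, rfl⟩
    exact mul_mem (pi_mem_uniformIETuples hx) (isUniformIETuple_const k y)

theorem coe_uniformIETuples_eq_const_mul : (uniformIETuples Γ X k : Set (Fin k → X)) =
    {z | ∃ (x : Fin k → X) (y : X),
      (∀ i, x i ∈ ieSubgroup Γ X) ∧ z = fun i => y * x i} := by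
  ext z
  refine ⟨fun hz => ?_, ?_⟩
  · rcases isEmpty_or_nonempty (Fin k) with hk | ⟨⟨j⟩⟩
    · exact ⟨z, 1, isEmptyElim, Subsingleton.elim _ _⟩
    · exact ⟨fun i => (z j)⁻¹ * z i, z j, fun i => inv_mul_mem_ieSubgroup hz i j, by simp⟩
  · rintro ⟨x, y, hx, rfl⟩
    exact mul_mem (isUniformIETuple_const k y) (pi_mem_uniformIETuples hx)

end CompactGroup

theorem isClosed_setOf_isIETuple {Γ : Type*} [Group Γ] [DecidableEq Γ] {X : Type*}
    [TopologicalSpace X] [MulAction Γ X] (k : ℕ) :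
    IsClosed {x : Fin k → X | IsIETuple (Γ := Γ) x} := by
  refine isClosed_of_closure_subset fun x hx U hU => ?_
  have hnear : ∀ᶠ y in 𝓝 x, ∀ i, U i ∈ 𝓝 (y i) := Filter.eventually_all.2 fun i =>
    (continuous_apply i).continuousAt.eventually (eventually_mem_nhds_iff.2 (hU i))
  obtain ⟨y, hyU, hy⟩ := (hnear.and_frequently (mem_closure_iff_frequently.1 hx)).exists
  exact hy U hyU

section Amenable

variable {Γ : Type*} [Group Γ] [DecidableEq Γ] {X : Type*} [Group X] [TopologicalSpace X]
  [IsTopologicalGroup X] [CompactSpace X] [MulDistribMulAction Γ X] [ContinuousConstSMul Γ X]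

theorem IEk_eq_uniformIETuples (hamen : IsFolner Γ) (k : ℕ) :
    IEk Γ (X := X) k = uniformIETuples Γ X k :=
  Set.ext fun _ => isIETuple_iff_isUniformIETuple hamen

theorem IE_eq_ieSubgroup (hamen : IsFolner Γ) : IE Γ X = ieSubgroup Γ X := by
  ext w
  have : ![w, 1] = Pi.mulSingle (0 : Fin 2) w := by
    funext i
    fin_cases i <;> simp
  change IsIETuple ![w, 1] ↔ _
  rw [this]
  exact isIETuple_iff_isUniformIETuple hamen

end Amenable

end Stmt17

open Stmt17 in
theorem stmt17_general {Γ : Type*} [Group Γ] [DecidableEq Γ]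
    {X : Type*} [Group X] [TopologicalSpace X] [IsTopologicalGroup X] [CompactSpace X]
    [MulDistribMulAction Γ X]
    (hamen : IsFolner Γ)
    (hcont : ∀ s : Γ, Continuous fun x : X => s • x) :
    -- (1) `IE(X)` is a closed `Γ`-invariant normal subgroup of `X`
    (IsClosed (IE Γ X) ∧
      (∀ (s : Γ), ∀ x ∈ IE Γ X, s • x ∈ IE Γ X) ∧
      (1 : X) ∈ IE Γ X ∧
      (∀ x ∈ IE Γ X, x⁻¹ ∈ IE Γ X) ∧
      (∀ x ∈ IE Γ X, ∀ y ∈ IE Γ X, x * y ∈ IE Γ X) ∧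
      (∀ x ∈ IE Γ X, ∀ g : X, g * x * g⁻¹ ∈ IE Γ X)) ∧
    -- (2) for every `k ∈ ℕ`, `IE_k(X)` is a closed `Γ`-invariant subgroup of `X^k`
    -- (product action), and the two product descriptions hold
    (∀ k : ℕ,
      IsClosed (IEk Γ (X := X) k) ∧
      (∀ (s : Γ), ∀ x ∈ IEk Γ (X := X) k, (fun i => s • x i) ∈ IEk Γ (X := X) k) ∧
      (1 : Fin k → X) ∈ IEk Γ (X := X) k ∧
      (∀ x ∈ IEk Γ (X := X) k, x⁻¹ ∈ IEk Γ (X := X) k) ∧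
      (∀ x ∈ IEk Γ (X := X) k, ∀ y ∈ IEk Γ (X := X) k, x * y ∈ IEk Γ (X := X) k) ∧
      IEk Γ (X := X) k =
        {z | ∃ (x : Fin k → X) (y : X), (∀ i, x i ∈ IE Γ X) ∧ z = fun i => x i * y} ∧
      IEk Γ (X := X) k =
        {z | ∃ (x : Fin k → X) (y : X), (∀ i, x i ∈ IE Γ X) ∧ z = fun i => y * x i}) := by
  have : ContinuousConstSMul Γ X := ⟨hcont⟩
  have hIE : IsClosed (IE Γ X) :=
    (isClosed_setOf_isIETuple 2).preimage (continuous_pi fun i => by fin_cases i <;> fun_prop)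
  rw [IE_eq_ieSubgroup hamen] at hIE ⊢
  refine ⟨⟨hIE, fun s x hx => smul_mem_ieSubgroup s hx, one_mem _, fun _ => inv_mem,
    fun _ hx _ hy => mul_mem hx hy, fun x hx g => Subgroup.Normal.conj_mem inferInstance x hx g⟩,
    fun k => ⟨isClosed_setOf_isIETuple k, ?_⟩⟩
  rw [IEk_eq_uniformIETuples hamen]
  exact ⟨fun s x hx => IsUniformIETuple.smul hx s, one_mem _, fun _ => inv_mem,
    fun _ hx _ hy => mul_mem hx hy, coe_uniformIETuples_eq_mul_const,
    coe_uniformIETuples_eq_const_mul⟩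

open Stmt17 in
theorem stmt17 {Γ : Type*} [Group Γ] [Countable Γ] [DecidableEq Γ]
    {X : Type*} [Group X] [TopologicalSpace X] [IsTopologicalGroup X] [CompactSpace X]
    [TopologicalSpace.MetrizableSpace X]
    [MulDistribMulAction Γ X]
    (hamen : IsFolner Γ)
    (hcont : ∀ s : Γ, Continuous fun x : X => s • x) :
    -- (1) `IE(X)` is a closed `Γ`-invariant normal subgroup of `X`
    (IsClosed (IE Γ X) ∧
      (∀ (s : Γ), ∀ x ∈ IE Γ X, s • x ∈ IE Γ X) ∧
      (1 : X) ∈ IE Γ X ∧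
      (∀ x ∈ IE Γ X, x⁻¹ ∈ IE Γ X) ∧
      (∀ x ∈ IE Γ X, ∀ y ∈ IE Γ X, x * y ∈ IE Γ X) ∧
      (∀ x ∈ IE Γ X, ∀ g : X, g * x * g⁻¹ ∈ IE Γ X)) ∧
    -- (2) for every `k ∈ ℕ`, `IE_k(X)` is a closed `Γ`-invariant subgroup of `X^k`
    -- (product action), and the two product descriptions hold
    (∀ k : ℕ,
      IsClosed (IEk Γ (X := X) k) ∧
      (∀ (s : Γ), ∀ x ∈ IEk Γ (X := X) k, (fun i => s • x i) ∈ IEk Γ (X := X) k) ∧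
      (1 : Fin k → X) ∈ IEk Γ (X := X) k ∧
      (∀ x ∈ IEk Γ (X := X) k, x⁻¹ ∈ IEk Γ (X := X) k) ∧
      (∀ x ∈ IEk Γ (X := X) k, ∀ y ∈ IEk Γ (X := X) k, x * y ∈ IEk Γ (X := X) k) ∧
      IEk Γ (X := X) k =
        {z | ∃ (x : Fin k → X) (y : X), (∀ i, x i ∈ IE Γ X) ∧ z = fun i => x i * y} ∧
      IEk Γ (X := X) k =
        {z | ∃ (x : Fin k → X) (y : X), (∀ i, x i ∈ IE Γ X) ∧ z = fun i => y * x i}) :=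
  stmt17_general hamen hcont
end
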